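/- arXiv:1404.0871 — 11 statements merged into one kernel-verified Lean document; each statement's English description precedes it below -/
import Mathlib

section
/- Let K be a convex body in ℝ^n, let h ≥ 0, and let C = ⋃_{i=1}^m [a_i, b_i] be a connected union of finitely many closed straight-line segments in ℝ^n. Suppose there are nonnegative reals δ_1, …, δ_m with a_i − b_i ∈ δ_i • (K + (−K)) for every i and δ_1 + ⋯ + δ_m ≤ h. Then there exists a translation vector t ∈ ℝ^n such that C ⊆ t + h • K. -/
open scoped Pointwise

/-! Each segment `[aᵢ, bᵢ]` lies in a translate of `δᵢ • K`: writing `aᵢ - bᵢ = u - w` with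
`u, w ∈ δᵢ • K`, both endpoints lie in `aᵢ - u + δᵢ • K`. Translates `P` of `d₁ • K` and `Q` of
`d₂ • K` sharing a point `z` both lie in `P + Q - {z}`, which by convexity is a translate of
`(d₁ + d₂) • K`. As the union of the closed segments is connected, the segments can be absorbed
one at a time, each meeting one already covered; this covers the union by a translate of
`(∑ δᵢ) • K`, hence of `h • K`. -/

open Set

section Homothets

variable {E : Type*} [AddCommGroup E] [Module ℝ E] {K : Set E}

theorem segment_subset_singleton_add_smul (hK : Convex ℝ K) {a b : E} {d : ℝ}
    (hab : a - b ∈ d • (K + -K)) : ∃ t, segment ℝ a b ⊆ {t} + d • K := by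
  rw [smul_add, smul_set_neg] at hab
  obtain ⟨u, hu, w, hw, huw : u + w = a - b⟩ := hab
  refine ⟨a - u, ((convex_singleton _).add (hK.smul d)).segment_subset
    ⟨a - u, rfl, u, hu, sub_add_cancel a u⟩ ⟨a - u, rfl, -w, hw, ?_⟩⟩
  rw [← sub_sub_cancel a b, ← huw, ← sub_sub, sub_eq_add_neg (a - u)]

theorem union_subset_add_sub_singleton {G : Type*} [AddCommGroup G] {P Q : Set G} {z : G}
    (hP : z ∈ P) (hQ : z ∈ Q) : P ∪ Q ⊆ P + Q - {z} := by
  rintro x (hx | hx)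
  · simpa using sub_mem_sub (add_mem_add hx hQ) (mem_singleton z)
  · simpa using sub_mem_sub (add_mem_add hP hx) (mem_singleton z)

theorem Convex.exists_union_subset_singleton_add_smul (hK : Convex ℝ K) {d₁ d₂ : ℝ}
    (hd₁ : 0 ≤ d₁) (hd₂ : 0 ≤ d₂) {S₁ S₂ : Set E} {t₁ t₂ : E} (h₁ : S₁ ⊆ {t₁} + d₁ • K)
    (h₂ : S₂ ⊆ {t₂} + d₂ • K) (hS : (S₁ ∩ S₂).Nonempty) :
    ∃ t, S₁ ∪ S₂ ⊆ {t} + (d₁ + d₂) • K := by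
  obtain ⟨z, hz₁, hz₂⟩ := hS
  refine ⟨t₁ + t₂ - z, (union_subset_union h₁ h₂).trans
    ((union_subset_add_sub_singleton (h₁ hz₁) (h₂ hz₂)).trans_eq ?_)⟩
  rw [hK.add_smul hd₁ hd₂, sub_eq_add_neg, sub_eq_add_neg, neg_singleton,
    ← singleton_add_singleton, ← singleton_add_singleton]
  abel_nf

theorem Convex.singleton_add_smul_subset (hK : Convex ℝ K) {k : E} (hk : k ∈ K) {d d' : ℝ}
    (hd : 0 ≤ d) (hdd' : d ≤ d') (t : E) :
    {t} + d • K ⊆ {t - (d' - d) • k} + d' • K := by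
  rintro _ ⟨_, rfl, y, hy, rfl⟩
  have hy' := add_mem_add hy (smul_mem_smul_set hk (a := d' - d))
  rw [← hK.add_smul hd (sub_nonneg.2 hdd'), add_sub_cancel] at hy'
  exact ⟨_, rfl, _, hy', sub_add_add_cancel _ _ _⟩

end Homothets

section Connected

variable {X ι : Type*} [TopologicalSpace X] {s : ι → Set X}

theorem IsPreconnected.exists_inter_nonempty_of_isClosed [Finite ι] (hs : ∀ i, IsClosed (s i))
    (hne : ∀ i, (s i).Nonempty) (hconn : IsPreconnected (⋃ i, s i)) {I : Set ι}
    (hI : I.Nonempty) (hIc : Iᶜ.Nonempty) : ∃ i ∈ I, ∃ j ∉ I, (s i ∩ s j).Nonempty := by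
  have hcover : ⋃ i, s i ⊆ (⋃ i ∈ I, s i) ∪ ⋃ j ∈ Iᶜ, s j := by
    rw [← biUnion_union, union_compl_self, biUnion_univ]
  obtain ⟨i, hi⟩ := hI
  obtain ⟨j, hj⟩ := hIc
  obtain ⟨x, -, hxI, hxIc⟩ := isPreconnected_closed_iff.1 hconn _ _
    (I.toFinite.isClosed_biUnion fun i _ ↦ hs i) (Iᶜ.toFinite.isClosed_biUnion fun j _ ↦ hs j)
    hcover
    (let ⟨x, hx⟩ := hne i; ⟨x, mem_iUnion.2 ⟨i, hx⟩, mem_biUnion hi hx⟩)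
    (let ⟨x, hx⟩ := hne j; ⟨x, mem_iUnion.2 ⟨j, hx⟩, mem_biUnion hj hx⟩)
  obtain ⟨i, hi, hxi⟩ := mem_iUnion₂.1 hxI
  obtain ⟨j, hj, hxj⟩ := mem_iUnion₂.1 hxIc
  exact ⟨i, hi, j, hj, x, hxi, hxj⟩

theorem IsConnected.finset_induction_of_isClosed [Fintype ι] [DecidableEq ι]
    (hs : ∀ i, IsClosed (s i)) (hne : ∀ i, (s i).Nonempty) (hconn : IsConnected (⋃ i, s i))
    {p : Finset ι → Prop} (hsingleton : ∀ i, p {i})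
    (hinsert : ∀ I : Finset ι, ∀ i ∈ I, ∀ j ∉ I, (s i ∩ s j).Nonempty → p I → p (insert j I)) :
    p Finset.univ := by
  classical
  obtain ⟨i₀, -⟩ := mem_iUnion.1 hconn.nonempty.some_mem
  have hp₀ : {i₀} ∈ ({I | p I} : Finset (Finset ι)) := by simpa using hsingleton i₀
  obtain ⟨I, hpI, hmax⟩ := Finset.exists_max_image _ Finset.card ⟨_, hp₀⟩
  obtain rfl | hIu := eq_or_ne I Finset.univ
  · simpa using hpI
  have hI : I.Nonempty := Finset.card_pos.1 (by simpa using hmax _ hp₀)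
  obtain ⟨i, hi, j, hj, hij⟩ := hconn.isPreconnected.exists_inter_nonempty_of_isClosed hs hne
    (I := I) (Finset.coe_nonempty.2 hI)
    (by simpa [Set.nonempty_compl, ← Finset.coe_univ] using hIu)
  have := hmax (insert j I) (by simpa using hinsert I i hi j hj hij (by simpa using hpI))
  rw [Finset.card_insert_of_notMem hj] at this
  omega

end Connected

theorem IsConnected.exists_iUnion_segment_subset_singleton_add_smul {E ι : Type*}
    [AddCommGroup E] [Module ℝ E] [TopologicalSpace E] [IsTopologicalAddGroup E]
    [ContinuousSMul ℝ E] [T2Space E] [Fintype ι] {K : Set E} (hK : Convex ℝ K) {a b : ι → E}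
    (hconn : IsConnected (⋃ i, segment ℝ (a i) (b i))) {δ : ι → ℝ} (hδ : ∀ i, 0 ≤ δ i)
    (hab : ∀ i, a i - b i ∈ δ i • (K + -K)) :
    ∃ t, ⋃ i, segment ℝ (a i) (b i) ⊆ {t} + (∑ i, δ i) • K := by
  classical
  have hclosed i : IsClosed (segment ℝ (a i) (b i)) :=
    convexHull_pair (𝕜 := ℝ) (a i) (b i) ▸ (toFinite _).isClosed_convexHull ℝ
  simpa using hconn.finset_induction_of_isClosed hclosed (fun i ↦ ⟨a i, left_mem_segment ..⟩)
    (p := fun I ↦ ∃ t, ⋃ i ∈ I, segment ℝ (a i) (b i) ⊆ {t} + (∑ i ∈ I, δ i) • K)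
    (fun i ↦ by simpa using segment_subset_singleton_add_smul hK (hab i))
    fun I i hi j hj ⟨x, hxi, hxj⟩ ⟨t, ht⟩ ↦ by
      rw [Finset.set_biUnion_insert, Finset.sum_insert hj]
      obtain ⟨tj, htj⟩ := segment_subset_singleton_add_smul hK (hab j)
      exact hK.exists_union_subset_singleton_add_smul (hδ j) (Finset.sum_nonneg fun i _ ↦ hδ i)
        htj ht ⟨x, hxj, mem_biUnion hi hxi⟩

theorem connected_segments_covered_by_homothet_general
    {n : ℕ} (K : Set (Fin n → ℝ)) (hKconv : Convex ℝ K)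
    (h : ℝ) (m : ℕ) (a b : Fin m → (Fin n → ℝ))
    (hconn : IsConnected (⋃ i, segment ℝ (a i) (b i)))
    (δ : Fin m → ℝ) (hδ : ∀ i, 0 ≤ δ i)
    (hab : ∀ i, a i - b i ∈ δ i • (K + -K))
    (hsum : ∑ i, δ i ≤ h) :
    ∃ t : Fin n → ℝ, (⋃ i, segment ℝ (a i) (b i)) ⊆ {t} + h • K := by
  obtain ⟨i₀, -⟩ := mem_iUnion.1 hconn.nonempty.some_mem
  obtain ⟨-, ⟨k, hk, -⟩, -⟩ := hab i₀
  obtain ⟨t, ht⟩ := hconn.exists_iUnion_segment_subset_singleton_add_smul hKconv hδ hab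
  exact ⟨_, ht.trans (hKconv.singleton_add_smul_subset hk
    (Finset.sum_nonneg fun i _ ↦ hδ i) hsum t)⟩

/-- A connected union of segments of total length `≤ h` (measured in the norm
with unit ball `K + (−K)`) can be covered by a translate of `h • K`. -/
theorem connected_segments_covered_by_homothet
    {n : ℕ} (K : Set (Fin n → ℝ)) (hK : IsCompact K) (hKconv : Convex ℝ K)
    (hKint : (interior K).Nonempty)
    (h : ℝ) (hh : 0 ≤ h) (m : ℕ) (a b : Fin m → (Fin n → ℝ))
    (hconn : IsConnected (⋃ i, segment ℝ (a i) (b i)))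
    (δ : Fin m → ℝ) (hδ : ∀ i, 0 ≤ δ i)
    (hab : ∀ i, a i - b i ∈ δ i • (K + -K))
    (hsum : ∑ i, δ i ≤ h) :
    ∃ t : Fin n → ℝ, (⋃ i, segment ℝ (a i) (b i)) ⊆ {t} + h • K :=
  connected_segments_covered_by_homothet_general K hKconv h m a b hconn δ hδ hab hsum
end

section
/- Let K be a convex body in ℝ^n, if two positive homothets δ • K + t and δ' • K + t' (with δ, δ' > 0 and t, t' ∈ ℝ^n) have a common point, then there exists t'' ∈ ℝ^n such that (δ • K + t) ∪ (δ' • K + t') ⊆ (δ + δ') • K + t''. -/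
open scoped Pointwise

/-- If two positive homothets `δ • K + t` and `δ' • K + t'` of a convex body
`K` intersect, their union is covered by a homothet `(δ + δ') • K + t''`. -/
theorem union_of_intersecting_homothets_covered
    {n : ℕ} (K : Set (Fin n → ℝ)) (hK : IsCompact K) (hKconv : Convex ℝ K)
    (hKint : (interior K).Nonempty)
    (δ δ' : ℝ) (hδ : 0 < δ) (hδ' : 0 < δ') (t t' : Fin n → ℝ)
    (hmeet : ((δ • K + {t}) ∩ (δ' • K + {t'})).Nonempty) :
    ∃ t'' : Fin n → ℝ, (δ • K + {t}) ∪ (δ' • K + {t'}) ⊆ (δ + δ') • K + {t''} := by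
  obtain ⟨x, hx1, hx2⟩ := hmeet
  rw [Set.add_singleton, Set.mem_image] at hx1 hx2
  obtain ⟨p, hp, hpx⟩ := hx1
  obtain ⟨q, hq, hqx⟩ := hx2
  obtain ⟨a, ha, rfl⟩ := hp
  obtain ⟨b, hb, rfl⟩ := hq
  have hs : (0:ℝ) < δ + δ' := by linarith
  refine ⟨x - δ • a - δ' • b, ?_⟩
  rintro y (hy | hy) <;>
    rw [Set.add_singleton, Set.mem_image] at hy ⊢ <;>
    obtain ⟨p, hp, rfl⟩ := hy <;>
    obtain ⟨k, hk, rfl⟩ := hp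
  · refine ⟨(δ + δ') • ((δ/(δ+δ')) • k + (δ'/(δ+δ')) • b), ?_, ?_⟩
    · exact Set.smul_mem_smul_set (hKconv hk hb (by positivity) (by positivity)
        (by field_simp))
    · have h1 : (δ + δ') • ((δ/(δ+δ')) • k + (δ'/(δ+δ')) • b) = δ • k + δ' • b := by
        rw [smul_add, smul_smul, smul_smul, mul_div_cancel₀ _ hs.ne',
          mul_div_cancel₀ _ hs.ne']
      rw [h1, ← hpx]
      module
  · refine ⟨(δ + δ') • ((δ/(δ+δ')) • a + (δ'/(δ+δ')) • k), ?_, ?_⟩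
    · exact Set.smul_mem_smul_set (hKconv ha hk (by positivity) (by positivity)
        (by field_simp))
    · have h1 : (δ + δ') • ((δ/(δ+δ')) • a + (δ'/(δ+δ')) • k) = δ • a + δ' • k := by
        rw [smul_add, smul_smul, smul_smul, mul_div_cancel₀ _ hs.ne',
          mul_div_cancel₀ _ hs.ne']
      rw [h1, ← hqx]
      module
end

section
/- Let K be a convex body in ℝ^n and let q_1, …, q_m ∈ ℝ^n be points such that the set {q_1, …, q_m} is not contained in any translate t + r • K with 0 < r < 1. Then Σ_{i=2}^{m} ‖q_i − q_{i−1}‖ ≥ 1, where ‖·‖ denotes the gauge (Minkowski functional) of the symmetric convex body K + (−K). -/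
open scoped Pointwise

private lemma mem_singleton_add_iff {E : Type*} [AddCommGroup E] {t x : E} {s : Set E} :
    x ∈ ({t} : Set E) + s ↔ x - t ∈ s := by
  constructor
  · rintro ⟨a, rfl, b, hb, rfl⟩
    simpa using hb
  · intro h
    exact ⟨t, rfl, x - t, h, by simp⟩

private lemma mem_smul_of_gauge_lt {E : Type*} [AddCommGroup E] [Module ℝ E] [TopologicalSpace E]
    {s : Set E} (hconv : Convex ℝ s) (h0 : (0 : E) ∈ s) (habs : Absorbent ℝ s)
    {x : E} {c : ℝ} (hc : gauge s x < c) : x ∈ c • s := by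
  obtain ⟨r, hr0, hrc, y, hy, rfl⟩ := exists_lt_of_gauge_lt habs hc
  have hc0 : 0 < c := hr0.trans hrc
  have : (r / c) • y ∈ s := by
    refine hconv.smul_mem_of_zero_mem h0 hy ⟨by positivity, ?_⟩
    rw [div_le_one hc0]; exact hrc.le
  refine ⟨(r / c) • y, this, ?_⟩
  show c • ((r / c) • y) = r • y
  rw [smul_smul, mul_div_cancel₀ _ hc0.ne']

/-- If the points `q 1, …, q m` cannot be covered by any translate `t + r • K`
with `0 < r < 1`, then `Σ_{i=2}^{m} ‖q i − q (i−1)‖ ≥ 1`, in the gauge norm of `K + (−K)`. -/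
theorem sum_gauge_dists_ge_one_of_not_coverable
    {n : ℕ} (K : Set (Fin n → ℝ)) (hK : IsCompact K) (hKconv : Convex ℝ K)
    (hKint : (interior K).Nonempty)
    (m : ℕ) (q : ℕ → (Fin n → ℝ))
    (hnc : ∀ (t : Fin n → ℝ) (r : ℝ), 0 < r → r < 1 → ¬ (q '' Set.Icc 1 m ⊆ {t} + r • K)) :
    1 ≤ ∑ i ∈ Finset.Icc 2 m, gauge (K + -K) (q i - q (i - 1)) := by
  obtain ⟨x₀, hx₀⟩ := hKint
  have hx₀K : x₀ ∈ K := interior_subset hx₀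
  set D : Set (Fin n → ℝ) := K + -K with hD
  have hDconv : Convex ℝ D := hKconv.add hKconv.neg
  have hD0 : (0 : Fin n → ℝ) ∈ D := ⟨x₀, hx₀K, -x₀, by simpa using hx₀K, by abel_nf⟩
  have hDnhds : D ∈ nhds (0 : Fin n → ℝ) := by
    have : x₀ + -x₀ ∈ interior K + -K := ⟨x₀, hx₀, -x₀, by simpa using hx₀K, rfl⟩
    have hsub : interior K + -K ⊆ interior D := by
      rw [hD]
      have : IsOpen (interior K + -K) := IsOpen.add_right isOpen_interior
      exact this.subset_interior_iff.2 (Set.add_subset_add_right interior_subset)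
    have h0i : (0 : Fin n → ℝ) ∈ interior D := by
      have := hsub this
      simpa using this
    exact mem_interior_iff_mem_nhds.mp h0i
  have hDabs : Absorbent ℝ D := absorbent_nhds_zero hDnhds
  -- main induction: for each k ∈ [1, m] and ε > 0 there is a covering translate
  have main : ∀ k, 1 ≤ k → ∀ ε : ℝ, 0 < ε → ∃ t : Fin n → ℝ,
      ∀ i, 1 ≤ i → i ≤ k →
        q i - t ∈ ((∑ j ∈ Finset.Icc 2 k, gauge D (q j - q (j - 1))) + ε) • K := by
    intro k
    induction k with
    | zero => omega
    | succ k ih =>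
      intro _ ε hε
      rcases Nat.eq_or_lt_of_le (Nat.one_le_iff_ne_zero.mpr (Nat.succ_ne_zero k)) with h1 | h1
      · -- k + 1 = 1, i.e. k = 0
        have hk0 : k = 0 := by omega
        subst hk0
        refine ⟨q 1 - ε • x₀, ?_⟩
        intro i hi1 hi2
        have : i = 1 := by omega
        subst this
        have hsum : (∑ j ∈ Finset.Icc 2 1, gauge D (q j - q (j - 1))) = 0 := by
          simp [Finset.Icc_eq_empty_of_lt]
        rw [hsum, zero_add]
        exact ⟨x₀, hx₀K, by simp [sub_sub_cancel]⟩
      · -- k ≥ 1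
        have hk1 : 1 ≤ k := by omega
        obtain ⟨t, ht⟩ := ih hk1 (ε / 2) (half_pos hε)
        set g := gauge D (q (k + 1) - q k) with hg
        have hgmem : q (k + 1) - q k ∈ (g + ε / 2) • D := by
          apply mem_smul_of_gauge_lt hDconv hD0 hDabs
          rw [hg]; linarith
        obtain ⟨y, hy, hyeq⟩ := hgmem
        obtain ⟨a, ha, b, hb, hab⟩ := hy
        have hb' : -b ∈ K := Set.mem_neg.mp hb
        set b' : Fin n → ℝ := -b with hb'def
        set c := g + ε / 2 with hc
        have hc0 : 0 < c := by
          have := gauge_nonneg (s := D) (q (k + 1) - q k)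
          rw [hc]; linarith [this]
        have hyeq' : c • y = q (k + 1) - q k := hyeq
        have hdiff : q (k + 1) - q k = c • a - c • b' := by
          rw [← hyeq', ← hab, hb'def, smul_add, smul_neg, sub_neg_eq_add]
        set S := ∑ j ∈ Finset.Icc 2 k, gauge D (q j - q (j - 1)) with hS
        have hS0 : 0 ≤ S := Finset.sum_nonneg fun _ _ => gauge_nonneg _
        have hSsucc : (∑ j ∈ Finset.Icc 2 (k + 1), gauge D (q j - q (j - 1)))
            = S + g := by
          rw [hS, hg]
          rw [Finset.sum_Icc_succ_top (by omega)]
          simp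
        refine ⟨t - c • b', ?_⟩
        intro i hi1 hi2
        have hdist : ((S + ε / 2) + c) • K = (S + ε / 2) • K + c • K := by
          exact hKconv.add_smul (by linarith) hc0.le
        have hcoef : (∑ j ∈ Finset.Icc 2 (k + 1), gauge D (q j - q (j - 1))) + ε
            = (S + ε / 2) + c := by
          rw [hSsucc, hc]; ring
        rw [hcoef, hdist]
        rcases Nat.lt_or_ge i (k + 1) with hik | hik
        · have hik' : i ≤ k := by omega
          have h1 := ht i hi1 hik'
          refine ⟨q i - t, h1, c • b', ⟨b', hb', rfl⟩, by abel_nf⟩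
        · have : i = k + 1 := by omega
          subst this
          have h1 := ht k hk1 le_rfl
          have : q (k + 1) - (t - c • b') = (q k - t) + c • a := by
            have := hdiff
            rw [sub_eq_iff_eq_add] at this
            rw [this]; abel
          rw [this]
          exact ⟨q k - t, h1, c • a, ⟨a, ha, rfl⟩, rfl⟩
  by_contra hlt
  push_neg at hlt
  set S := ∑ i ∈ Finset.Icc 2 m, gauge D (q i - q (i - 1)) with hS
  have hS0 : 0 ≤ S := Finset.sum_nonneg fun _ _ => gauge_nonneg _
  rcases Nat.lt_or_ge m 1 with hm | hm
  · -- m = 0 : the image is empty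
    refine hnc 0 (1/2) (by norm_num) (by norm_num) ?_
    intro x hx
    obtain ⟨i, hi, rfl⟩ := hx
    simp only [Set.mem_Icc] at hi
    omega
  · set ε := (1 - S) / 2 with hε
    have hεpos : 0 < ε := by rw [hε]; linarith
    obtain ⟨t, ht⟩ := main m hm ε hεpos
    have hr1 : S + ε < 1 := by rw [hε]; linarith
    refine hnc t (S + ε) (by linarith) hr1 ?_
    intro x hx
    obtain ⟨i, hi, rfl⟩ := hx
    simp only [Set.mem_Icc] at hi
    rw [mem_singleton_add_iff]
    exact ht i hi.1 hi.2
end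

section
/- Let K be a convex body in ℝ^n and let q_1, …, q_m ∈ ℝ^n with 2 ≤ m ≤ n + 1 be points such that the set {q_1, …, q_m} is not contained in any translate t + r • K with 0 < r < 1. Then the length of the closed polygonal line through these points, L = Σ_{i=1}^{m} ‖q_{i+1} − q_i‖ (indices taken cyclically, q_{m+1} = q_1), measured in the norm given by the gauge of K + (−K), satisfies L ≥ 1 + 1/n. -/
/-!
Let `vᵢ` be the edges, `L = ∑ ‖vᵢ‖` in the gauge of `K + -K`, and fix `Λ > L`. Choosing
`cᵢ > ‖vᵢ‖` with `∑ cᵢ = Λ`, each edge splits as `vᵢ = aᵢ - bᵢ` with `aᵢ, bᵢ ∈ cᵢ • K`.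
Every chord `q j - q k` is the sum of the edges along one of the two arcs from `q k` to `q j`,
so with `s = ∑ bᵢ` the vector `q j - q k + s` is a sum of one element of each `cᵢ • K`
(`aᵢ` on that arc, `bᵢ` off it) and lies in `Λ • K`. Averaging over the `m - 1` indices
`k ≠ j` puts every `q j` into one translate of `((m - 1) / m * Λ) • K`. Non-coverability
forces `(m - 1) / m * Λ ≥ 1` for all `Λ > L`, so `L ≥ m / (m - 1) ≥ 1 + 1 / n`.
-/

open scoped Pointwise
open Finset

section Convex

variable {E : Type*} [AddCommGroup E] [Module ℝ E] {K : Set E}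

theorem mem_smul_of_gauge_lt_s6 (hK : Convex ℝ K) (habs : Absorbent ℝ K) {x : E} {a : ℝ}
    (h : gauge K x < a) : x ∈ a • K := by
  obtain ⟨b, hb, hba, y, hy, rfl⟩ := exists_lt_of_gauge_lt habs h
  have ha : 0 < a := hb.trans hba
  refine ⟨(b / a) • y, hK.smul_mem_of_zero_mem habs.zero_mem hy
    ⟨by positivity, (div_le_one ha).2 hba.le⟩, ?_⟩
  change a • (b / a) • y = b • y
  rw [smul_smul, mul_div_cancel₀ _ ha.ne']

theorem exists_sub_eq_of_mem_smul_add_neg {x : E} {c : ℝ} (h : x ∈ c • (K + -K)) :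
    ∃ a ∈ c • K, ∃ b ∈ c • K, x = a - b := by
  rw [smul_add, Set.smul_set_neg] at h
  obtain ⟨a, ha, b, hb, rfl⟩ := h
  exact ⟨a, ha, -b, Set.mem_neg.1 hb, (sub_neg_eq_add a b).symm⟩

theorem Convex.sum_mem_sum_smul {ι : Type*} (hK : Convex ℝ K) (hne : K.Nonempty)
    (t : Finset ι) {c : ι → ℝ} {f : ι → E} (hc : ∀ i ∈ t, 0 ≤ c i)
    (hf : ∀ i ∈ t, f i ∈ c i • K) : ∑ i ∈ t, f i ∈ (∑ i ∈ t, c i) • K := by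
  classical
  induction t using Finset.induction with
  | empty => simp [Set.zero_smul_set hne]
  | insert j t hj ih =>
    rw [sum_insert hj, sum_insert hj, hK.add_smul (hc j (mem_insert_self j t))
      (sum_nonneg fun i hi ↦ hc i (mem_insert_of_mem hi))]
    exact Set.add_mem_add (hf j (mem_insert_self j t))
      (ih (fun i hi ↦ hc i (mem_insert_of_mem hi)) fun i hi ↦ hf i (mem_insert_of_mem hi))

theorem Convex.sum_sub_add_sum_mem_smul {ι : Type*} (hK : Convex ℝ K) (hne : K.Nonempty)
    {S A : Finset ι} (hA : A ⊆ S) {c : ι → ℝ} {a b : ι → E} (hc : ∀ i ∈ S, 0 ≤ c i)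
    (ha : ∀ i ∈ S, a i ∈ c i • K) (hb : ∀ i ∈ S, b i ∈ c i • K) :
    ∑ i ∈ A, (a i - b i) + ∑ i ∈ S, b i ∈ (∑ i ∈ S, c i) • K := by
  classical
  have hsplit : ∑ i ∈ A, (a i - b i) + ∑ i ∈ S, b i = ∑ i ∈ S, if i ∈ A then a i else b i := by
    rw [← inter_eq_right.2 hA, ← sum_ite_mem, ← sum_add_distrib, inter_eq_right.2 hA]
    exact sum_congr rfl fun i _ ↦ by split_ifs <;> simp
  rw [hsplit]
  exact hK.sum_mem_sum_smul hne S hc fun i hi ↦ by split_ifs <;> [exact ha i hi; exact hb i hi]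

theorem Convex.sub_centroid_mem_smul {ι : Type*} {C : Set E} (hC : Convex ℝ C) {S : Finset ι}
    (hS : 2 ≤ #S) {p : ι → E} (hp : ∀ j ∈ S, ∀ k ∈ S, j ≠ k → p j - p k ∈ C) {j : ι}
    (hj : j ∈ S) : p j - (#S : ℝ)⁻¹ • ∑ k ∈ S, p k ∈ ((#S - 1) / #S : ℝ) • C := by
  classical
  have hT : (#(S.erase j) : ℝ) = #S - 1 := by
    rw [card_erase_of_mem hj, Nat.cast_sub (by omega), Nat.cast_one]
  have hS2 : (2 : ℝ) ≤ #S := by exact_mod_cast hS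
  have hmem : (S.erase j).centerMass 1 (fun k ↦ p j - p k) ∈ C :=
    hC.centerMass_mem (fun _ _ ↦ zero_le_one)
      (by simp only [Pi.one_apply, sum_const, nsmul_eq_mul, mul_one, hT]; linarith)
      fun k hk ↦ hp j hj k (mem_of_mem_erase hk) (ne_of_mem_erase hk).symm
  refine ⟨_, hmem, ?_⟩
  have hS0 : (#S : ℝ) ≠ 0 := by positivity
  have hT0 : (#S : ℝ) - 1 ≠ 0 := by linarith
  have hcm : (S.erase j).centerMass (1 : ι → ℝ) (fun k ↦ p j - p k)
      = ((#S : ℝ) - 1)⁻¹ • (((#S : ℝ) - 1) • p j - ∑ k ∈ S.erase j, p k) := by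
    simp [Finset.centerMass, sum_sub_distrib, hT, ← Nat.cast_smul_eq_nsmul ℝ]
  rw [hcm, ← add_sum_erase S p hj]
  match_scalars <;> field_simp

end Convex

section Polygon

variable {E : Type*} [AddCommGroup E]

def polygonEdge (q : ℕ → E) (m i : ℕ) : E := q (if i = m then 1 else i + 1) - q i

theorem sum_Ico_polygonEdge (q : ℕ → E) {m k j : ℕ} (hkj : k ≤ j) (hjm : j ≤ m) :
    ∑ i ∈ Ico k j, polygonEdge q m i = q j - q k := by
  rw [← sum_Ico_sub q hkj]
  refine sum_congr rfl fun i hi ↦ ?_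
  rw [polygonEdge, if_neg (by grind)]

theorem sum_polygonEdge (q : ℕ → E) (m : ℕ) : ∑ i ∈ Icc 1 m, polygonEdge q m i = 0 := by
  rcases Nat.eq_zero_or_pos m with rfl | hm
  · simp
  rw [← Ico_add_one_right_eq_Icc, sum_Ico_succ_top hm, sum_Ico_polygonEdge q hm le_rfl,
    polygonEdge, if_pos rfl]
  abel

theorem exists_subset_sum_polygonEdge_eq (q : ℕ → E) {m j k : ℕ} (hj : j ∈ Icc 1 m)
    (hk : k ∈ Icc 1 m) : ∃ A ⊆ Icc 1 m, ∑ i ∈ A, polygonEdge q m i = q j - q k := by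
  rw [mem_Icc] at hj hk
  rcases le_total k j with hkj | hjk
  · exact ⟨Ico k j, fun i hi ↦ by grind, sum_Ico_polygonEdge q hkj hj.2⟩
  · refine ⟨Icc 1 m \ Ico j k, sdiff_subset, ?_⟩
    rw [sum_sdiff_eq_sub (fun i hi ↦ by grind), sum_polygonEdge, sum_Ico_polygonEdge q hjk hk.2,
      zero_sub, neg_sub]

end Polygon

section Covering

variable {E : Type*} [AddCommGroup E] [Module ℝ E] {K : Set E}

theorem exists_translate_cover_of_polygonEdge_mem_smul (hK : Convex ℝ K) {q : ℕ → E} {m : ℕ}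
    (hm : 2 ≤ m) {c : ℕ → ℝ} (hc : ∀ i ∈ Icc 1 m, 0 ≤ c i)
    (hedge : ∀ i ∈ Icc 1 m, polygonEdge q m i ∈ c i • (K + -K)) :
    ∃ t, ∀ j ∈ Icc 1 m, q j - t ∈ ((m - 1) / m * ∑ i ∈ Icc 1 m, c i) • K := by
  obtain ⟨_, ⟨x, hx, -⟩, -⟩ := hedge 1 (mem_Icc.2 ⟨le_rfl, by omega⟩)
  have hne : K.Nonempty := ⟨x, hx⟩
  choose! a ha b hb hab using fun i hi ↦ exists_sub_eq_of_mem_smul_add_neg (hedge i hi)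
  set s := ∑ i ∈ Icc 1 m, b i
  set Λ := ∑ i ∈ Icc 1 m, c i
  have hchord : ∀ j ∈ Icc 1 m, ∀ k ∈ Icc 1 m, j ≠ k → q j - q k ∈ (s + ·) ⁻¹' (Λ • K) := by
    intro j hj k hk _
    obtain ⟨A, hA, hsum⟩ := exists_subset_sum_polygonEdge_eq q hj hk
    rw [Set.mem_preimage, ← hsum, sum_congr rfl fun i hi ↦ hab i (hA hi), add_comm]
    exact hK.sum_sub_add_sum_mem_smul hne hA hc ha hb
  have hcard : #(Icc 1 m) = m := by simp
  refine ⟨(m : ℝ)⁻¹ • ∑ k ∈ Icc 1 m, q k - ((m - 1) / m : ℝ) • s, fun j hj ↦ ?_⟩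
  obtain ⟨y, hy, hqy⟩ := ((hK.smul Λ).translate_preimage_right s).sub_centroid_mem_smul
    (hcard.symm ▸ hm) hchord hj
  simp only [hcard] at hqy
  rw [mul_smul]
  refine ⟨s + y, hy, ?_⟩
  change ((m - 1) / m : ℝ) • (s + y) = _
  rw [smul_add, hqy]
  abel

theorem exists_translate_cover_of_sum_gauge_lt (hK : Convex ℝ K) (habs : Absorbent ℝ (K + -K))
    {q : ℕ → E} {m : ℕ} (hm : 2 ≤ m) {Λ : ℝ}
    (hΛ : ∑ i ∈ Icc 1 m, gauge (K + -K) (polygonEdge q m i) < Λ) :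
    ∃ t, ∀ j ∈ Icc 1 m, q j - t ∈ ((m - 1) / m * Λ) • K := by
  set L := ∑ i ∈ Icc 1 m, gauge (K + -K) (polygonEdge q m i)
  set ε := (Λ - L) / m
  have hε : 0 < ε := div_pos (by linarith) (by positivity)
  have hsum : ∑ i ∈ Icc 1 m, (gauge (K + -K) (polygonEdge q m i) + ε) = Λ := by
    have hm0 : (m : ℝ) ≠ 0 := by positivity
    rw [sum_add_distrib, sum_const, Nat.card_Icc, add_tsub_cancel_right, nsmul_eq_mul,
      mul_div_cancel₀ _ hm0, add_sub_cancel]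
  rw [← hsum]
  exact exists_translate_cover_of_polygonEdge_mem_smul hK hm
    (fun i _ ↦ (gauge_nonneg _).trans (le_add_of_nonneg_right hε.le))
    fun i _ ↦ mem_smul_of_gauge_lt_s6 (hK.add hK.neg) habs (lt_add_of_pos_right _ hε)

end Covering

theorem absorbent_add_neg_of_interior_nonempty {E : Type*} [AddCommGroup E] [Module ℝ E]
    [TopologicalSpace E] [IsTopologicalAddGroup E] [ContinuousSMul ℝ E] {K : Set E}
    (hK : (interior K).Nonempty) : Absorbent ℝ (K + -K) := by
  obtain ⟨z, hz⟩ := hK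
  refine absorbent_nhds_zero (mem_interior_iff_mem_nhds.1 (subset_interior_add_left ?_))
  exact ⟨z, hz, -z, Set.neg_mem_neg.2 (interior_subset hz), add_neg_cancel z⟩

theorem closed_polygon_length_ge_one_add_inv_n_general
    {n : ℕ} (K : Set (Fin n → ℝ)) (hKconv : Convex ℝ K)
    (hKint : (interior K).Nonempty)
    (m : ℕ) (hm : 2 ≤ m) (hmn : m ≤ n + 1) (q : ℕ → (Fin n → ℝ))
    (hnc : ∀ (t : Fin n → ℝ) (r : ℝ), 0 < r → r < 1 → ¬ (q '' Set.Icc 1 m ⊆ {t} + r • K)) :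
    1 + 1 / (n : ℝ) ≤
      ∑ i ∈ Finset.Icc 1 m, gauge (K + -K) (q (if i = m then 1 else i + 1) - q i) := by
  by_contra! hlt
  obtain ⟨Λ, hLΛ, hΛ⟩ := exists_between hlt
  obtain ⟨t, ht⟩ := exists_translate_cover_of_sum_gauge_lt hKconv
    (absorbent_add_neg_of_interior_nonempty hKint) hm hLΛ
  have hm2 : (2 : ℝ) ≤ m := by exact_mod_cast hm
  have hmn' : (m : ℝ) ≤ n + 1 := by exact_mod_cast hmn
  have hn : (0 : ℝ) < n := by linarith
  have hr : (0 : ℝ) < (m - 1) / m := div_pos (by linarith) (by linarith)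
  have hΛ0 : 0 < Λ := (sum_nonneg fun i _ ↦ gauge_nonneg _).trans_lt hLΛ
  refine hnc t ((m - 1) / m * Λ) (by positivity) ?_ ?_
  · calc (m - 1) / m * Λ < (m - 1) / m * (1 + 1 / n) := by gcongr
      _ = (m - 1 + (m - 1) / n) / m := by ring
      _ ≤ 1 := by
        rw [div_le_one (by linarith)]
        linarith [(div_le_one hn).2 (by linarith : (m : ℝ) - 1 ≤ n)]
  · rintro _ ⟨j, hj, rfl⟩
    exact ⟨t, rfl, q j - t, ht j (mem_Icc.2 hj), add_sub_cancel t (q j)⟩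

/-- If the points `q 1, …, q m` (with `2 ≤ m ≤ n + 1`) cannot be covered by
any translate `t + r • K` with `0 < r < 1`, then the closed polygonal line through them has
length at least `1 + 1/n` in the gauge norm of `K + (−K)`. -/
theorem closed_polygon_length_ge_one_add_inv_n
    {n : ℕ} (K : Set (Fin n → ℝ)) (hK : IsCompact K) (hKconv : Convex ℝ K)
    (hKint : (interior K).Nonempty)
    (m : ℕ) (hm : 2 ≤ m) (hmn : m ≤ n + 1) (q : ℕ → (Fin n → ℝ))
    (hnc : ∀ (t : Fin n → ℝ) (r : ℝ), 0 < r → r < 1 → ¬ (q '' Set.Icc 1 m ⊆ {t} + r • K)) :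
    1 + 1 / (n : ℝ) ≤
      ∑ i ∈ Finset.Icc 1 m, gauge (K + -K) (q (if i = m then 1 else i + 1) - q i) :=
  closed_polygon_length_ge_one_add_inv_n_general K hKconv hKint m hm hmn q hnc
end

section
/- Let K be a convex body in ℝ^n, let f_1, f_2 be two nonzero linear functionals on ℝ^n, and suppose K is covered by finitely many planks P_1, …, P_m, where each P_i = {x ∈ ℝ^n : c_i ≤ f_{j(i)}(x) ≤ d_i} with j(i) ∈ {1, 2} and c_i ≤ d_i. Then Σ_{i=1}^{m} (d_i − c_i) / ( max_{x ∈ K} f_{j(i)}(x) − min_{x ∈ K} f_{j(i)}(x) ) ≥ 1. In other words, the Bang conjecture holds when the normals of the covering planks have only two distinct directions: the sum of the widths of the planks in the norm with unit ball K + (−K) is at least 1. -/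
/-!
Let `F = f 0` attain its minimum and maximum on `K` at `C` and `D`, and `G = f 1` at `A` and `B`.
Spread a probability measure `μ` over the five segments `CA, CB, AD, BD, AB ⊆ K`, uniformly on
each, with weights chosen so that both push-forwards `F_*μ` and `G_*μ` are uniform on `F(K)` and
`G(K)`. Then every plank has `μ`-mass at most its relative width, and since the planks cover `K`,
the relative widths add up to at least `μ(K) = 1`.

On the scales normalised by `F(C) = 0, F(D) = 1, F(A) = α, F(B) = β` and
`G(A) = 0, G(B) = 1, G(C) = γ, G(D) = δ`, the weights are `γρ, (1-γ)ρ, δρ', (1-δ)ρ', 1-ρ-ρ'`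
with `ρ = αβ / (γβ + (1-γ)α)` and `ρ'` the same expression in `(1-α, 1-β, δ)`. The weight
`1-ρ-ρ'` of `AB` may be negative, but then it is nonnegative once the roles of `F` and `G` are
exchanged.
-/

open MeasureTheory Set

theorem volume_setOf_lineMap_mem {u v : ℝ} (huv : u ≠ v) (S : Set ℝ) :
    volume {t ∈ Icc (0 : ℝ) 1 | (AffineMap.lineMap u v : ℝ → ℝ) t ∈ S} =
      ENNReal.ofReal |v - u|⁻¹ * volume (S ∩ uIcc u v) := by
  set L : ℝ → ℝ := ⇑(AffineMap.lineMap u v : ℝ →ᵃ[ℝ] ℝ)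
  have hL : L = (fun y => u + y) ∘ fun t => (v - u) * t := by
    funext t; simp only [L, AffineMap.lineMap_apply_ring', Function.comp_apply]; ring
  have hIcc : L ⁻¹' uIcc u v = Icc 0 1 := by
    rw [← segment_eq_uIcc, segment_eq_image_lineMap,
      preimage_image_eq _ (AffineMap.lineMap_injective ℝ huv)]
  have hset : {t ∈ Icc (0 : ℝ) 1 | L t ∈ S} = L ⁻¹' (S ∩ uIcc u v) := by
    rw [preimage_inter, hIcc, inter_comm]; rfl
  rw [hset, hL, preimage_comp, Real.volume_preimage_mul_left (sub_ne_zero.2 huv.symm),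
    measure_preimage_add, abs_inv]

theorem LinearMap.apply_lineMap {E : Type*} [AddCommGroup E] [Module ℝ E] (g : E →ₗ[ℝ] ℝ)
    (p q : E) (t : ℝ) : g (AffineMap.lineMap p q t) = AffineMap.lineMap (g p) (g q) t :=
  g.toAffineMap.apply_lineMap p q t

section SegmentDensity

variable {ι : Type*} [Fintype ι]

/-- The density of `∑ k, W k • (uniform probability on [u k, v k])`. A degenerate segment
(`u k = v k`) contributes `0` here, as `|0|⁻¹ = 0`, so its weight has to vanish. -/
noncomputable def segmentDensity (W u v : ι → ℝ) (x : ℝ) : ℝ :=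
  ∑ k, W k / |v k - u k| * (uIcc (u k) (v k)).indicator 1 x

theorem segmentDensity_nonneg {W : ι → ℝ} (hW : ∀ k, 0 ≤ W k) (u v : ι → ℝ) (x : ℝ) :
    0 ≤ segmentDensity W u v x :=
  Finset.sum_nonneg fun k _ => mul_nonneg (div_nonneg (hW k) (abs_nonneg _))
    (indicator_nonneg (fun _ _ => zero_le_one) x)

theorem segmentDensity_eq_zero_of_notMem {W u v : ι → ℝ} {a b x : ℝ}
    (hu : ∀ k, u k ∈ Icc a b) (hv : ∀ k, v k ∈ Icc a b) (hx : x ∉ Icc a b) :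
    segmentDensity W u v x = 0 :=
  Finset.sum_eq_zero fun k _ => by
    rw [indicator_of_notMem fun h => hx (uIcc_subset_Icc (hu k) (hv k) h), mul_zero]

theorem segmentDensity_affine (W u v : ι → ℝ) (a : ℝ) {s : ℝ} (hs : 0 < s) (x : ℝ) :
    segmentDensity W (fun k => a + s * u k) (fun k => a + s * v k) (a + s * x) =
      segmentDensity W u v x / s := by
  simp only [segmentDensity, Finset.sum_div]
  refine Finset.sum_congr rfl fun k _ => ?_
  have hmem : a + s * x ∈ uIcc (a + s * u k) (a + s * v k) ↔ x ∈ uIcc (u k) (v k) := by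
    simp [mem_uIcc, hs]
  rw [show a + s * v k - (a + s * u k) = s * (v k - u k) by ring, abs_mul, abs_of_pos hs]
  by_cases hx : x ∈ uIcc (u k) (v k)
  · rw [indicator_of_mem (hmem.2 hx), indicator_of_mem hx, Pi.one_apply, Pi.one_apply]; field_simp
  · rw [indicator_of_notMem (mt hmem.1 hx), indicator_of_notMem hx]; simp

theorem ae_segmentDensity_affine_le {W u v : ι → ℝ} (a : ℝ) {s : ℝ} (hs : 0 < s) {N : Set ℝ}
    (hN : N.Countable) (h : ∀ x ∉ N, segmentDensity W u v x ≤ 1) :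
    ∀ᵐ y, segmentDensity W (fun k => a + s * u k) (fun k => a + s * v k) y ≤ s⁻¹ := by
  filter_upwards [(hN.image fun x => a + s * x).ae_notMem volume] with y hy
  obtain ⟨x, rfl⟩ : ∃ x, y = a + s * x := ⟨(y - a) / s, by field_simp; ring⟩
  rw [segmentDensity_affine _ _ _ _ hs, div_eq_mul_inv]
  exact mul_le_of_le_one_left (inv_nonneg.2 hs.le) (h x fun hx => hy (mem_image_of_mem _ hx))

theorem ofReal_mul_volume_setOf_lineMap_mem {w u v : ℝ} (hw : 0 ≤ w) (hdeg : u = v → w = 0)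
    (c d : ℝ) :
    ENNReal.ofReal w * volume {t ∈ Icc (0 : ℝ) 1 | (AffineMap.lineMap u v : ℝ → ℝ) t ∈ Icc c d} =
      ∫⁻ x in Icc c d, ENNReal.ofReal (w / |v - u| * (uIcc u v).indicator 1 x) := by
  rcases eq_or_ne u v with huv | huv
  · simp [hdeg huv]
  have hind : (fun x => ENNReal.ofReal (w / |v - u| * (uIcc u v).indicator 1 x)) =
      (uIcc u v).indicator fun _ => ENNReal.ofReal (w / |v - u|) := by
    funext x; by_cases hx : x ∈ uIcc u v <;> simp [hx]
  rw [hind, lintegral_indicator_const measurableSet_uIcc,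
    Measure.restrict_apply measurableSet_uIcc, volume_setOf_lineMap_mem huv, ← mul_assoc,
    ← ENNReal.ofReal_mul hw, inter_comm, div_eq_mul_inv]

theorem sum_ofReal_mul_volume_le_of_ae_segmentDensity_le {W u v : ι → ℝ} (hW : ∀ k, 0 ≤ W k)
    (hdeg : ∀ k, u k = v k → W k = 0) {M : ℝ} (hM : ∀ᵐ x, segmentDensity W u v x ≤ M)
    (c d : ℝ) :
    ∑ k, ENNReal.ofReal (W k) *
        volume {t ∈ Icc (0 : ℝ) 1 | (AffineMap.lineMap (u k) (v k) : ℝ → ℝ) t ∈ Icc c d} ≤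
      ENNReal.ofReal M * volume (Icc c d) := by
  set φ : ι → ℝ → ℝ := fun k x => W k / |v k - u k| * (uIcc (u k) (v k)).indicator 1 x
  have hφ0 : ∀ k x, 0 ≤ φ k x := fun k x =>
    mul_nonneg (div_nonneg (hW k) (abs_nonneg _)) (indicator_nonneg (fun _ _ => zero_le_one) x)
  have hφ : ∀ k, Measurable fun x => ENNReal.ofReal (φ k x) := fun k =>
    ENNReal.measurable_ofReal.comp ((measurable_const.indicator measurableSet_uIcc).const_mul _)
  calc _ = ∑ k, ∫⁻ x in Icc c d, ENNReal.ofReal (φ k x) :=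
        Finset.sum_congr rfl fun k _ => ofReal_mul_volume_setOf_lineMap_mem (hW k) (hdeg k) c d
    _ = ∫⁻ x in Icc c d, ENNReal.ofReal (segmentDensity W u v x) := by
        rw [← lintegral_finsetSum _ fun k _ => hφ k]
        exact lintegral_congr fun x => (ENNReal.ofReal_sum_of_nonneg fun k _ => hφ0 k x).symm
    _ ≤ ∫⁻ _ in Icc c d, ENNReal.ofReal M :=
        lintegral_mono_ae (ae_restrict_of_ae (hM.mono fun x hx => ENNReal.ofReal_le_ofReal hx))
    _ = ENNReal.ofReal M * volume (Icc c d) := setLIntegral_const _ _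

end SegmentDensity

theorem one_le_sum_mul_of_ae_segmentDensity_le {E : Type*} [AddCommGroup E] [Module ℝ E]
    {K : Set E} (hK : Convex ℝ K) {ι κ : Type*} [Fintype ι] [Fintype κ] {W : ι → ℝ}
    {p q : ι → E} (hW : ∀ k, 0 ≤ W k) (hW1 : ∑ k, W k = 1) (hp : ∀ k, p k ∈ K)
    (hq : ∀ k, q k ∈ K) {g : κ → E →ₗ[ℝ] ℝ} {c d M : κ → ℝ} (hcd : ∀ i, c i ≤ d i)
    (hcover : K ⊆ ⋃ i, {x | c i ≤ g i x ∧ g i x ≤ d i})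
    (hdeg : ∀ i k, g i (p k) = g i (q k) → W k = 0)
    (hdens : ∀ i, ∀ᵐ x, segmentDensity W (fun k => g i (p k)) (fun k => g i (q k)) x ≤ M i) :
    1 ≤ ∑ i, M i * (d i - c i) := by
  set piece : κ → ι → Set ℝ := fun i k =>
    {t ∈ Icc (0 : ℝ) 1 | (AffineMap.lineMap (g i (p k)) (g i (q k)) : ℝ → ℝ) t ∈ Icc (c i) (d i)}
  have hsegment : ∀ k, 1 ≤ ∑ i, volume (piece i k) := fun k => by
    have hcov : Icc (0 : ℝ) 1 ⊆ ⋃ i, piece i k := fun t ht => by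
      have hx : AffineMap.lineMap (p k) (q k) t ∈ K := hK.segment_subset (hp k) (hq k)
        (by rw [segment_eq_image_lineMap]; exact mem_image_of_mem _ ht)
      obtain ⟨i, hi⟩ := mem_iUnion.1 (hcover hx)
      exact mem_iUnion.2 ⟨i, ht, by rwa [← LinearMap.apply_lineMap]⟩
    calc (1 : ENNReal) = volume (Icc (0 : ℝ) 1) := by simp
      _ ≤ ∑ i, volume (piece i k) := (measure_mono hcov).trans (measure_iUnion_fintype_le _ _)
  have hM0 : ∀ i, 0 ≤ M i := fun i =>
    let ⟨x, hx⟩ := (hdens i).exists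
    (segmentDensity_nonneg hW _ _ x).trans hx
  have key : (1 : ENNReal) ≤ ENNReal.ofReal (∑ i, M i * (d i - c i)) := calc
    (1 : ENNReal) = ∑ k, ENNReal.ofReal (W k) * 1 := by
        simp_rw [mul_one]
        rw [← ENNReal.ofReal_sum_of_nonneg fun k _ => hW k, hW1, ENNReal.ofReal_one]
    _ ≤ ∑ k, ENNReal.ofReal (W k) * ∑ i, volume (piece i k) := by gcongr with k; exact hsegment k
    _ = ∑ i, ∑ k, ENNReal.ofReal (W k) * volume (piece i k) := by
        simp_rw [Finset.mul_sum]; exact Finset.sum_comm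
    _ ≤ ∑ i, ENNReal.ofReal (M i) * volume (Icc (c i) (d i)) := by
        gcongr with i
        exact sum_ofReal_mul_volume_le_of_ae_segmentDensity_le hW (hdeg i) (hdens i) _ _
    _ = ENNReal.ofReal (∑ i, M i * (d i - c i)) := by
        rw [ENNReal.ofReal_sum_of_nonneg fun i _ => mul_nonneg (hM0 i) (sub_nonneg.2 (hcd i))]
        simp_rw [Real.volume_Icc, ← ENNReal.ofReal_mul (hM0 _)]
  exact ENNReal.one_le_ofReal.1 key

section FanMass

variable {α β γ δ : ℝ}

noncomputable def fanMass (α β γ : ℝ) : ℝ := α * β / (γ * β + (1 - γ) * α)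

theorem fanMass_nonneg (hα : 0 ≤ α) (hβ : 0 ≤ β) (hγ0 : 0 ≤ γ) (hγ1 : γ ≤ 1) :
    0 ≤ fanMass α β γ := by
  unfold fanMass; have := sub_nonneg.2 hγ1; positivity

theorem fanMass_le_one (hα0 : 0 ≤ α) (hα1 : α ≤ 1) (hβ0 : 0 ≤ β) (hβ1 : β ≤ 1) (hγ0 : 0 ≤ γ)
    (hγ1 : γ ≤ 1) : fanMass α β γ ≤ 1 := by
  have h1γ := sub_nonneg.2 hγ1
  refine div_le_one_of_le₀ ?_ (by positivity)
  nlinarith [mul_nonneg (mul_nonneg hγ0 hβ0) (sub_nonneg.2 hα1),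
    mul_nonneg (mul_nonneg h1γ hα0) (sub_nonneg.2 hβ1)]

theorem fanMass_mul (hα : 0 ≤ α) (hβ : 0 ≤ β) (hγ0 : 0 ≤ γ) (hγ1 : γ ≤ 1) :
    fanMass α β γ * (γ * β + (1 - γ) * α) = α * β := by
  have h1γ := sub_nonneg.2 hγ1
  rcases eq_or_ne (γ * β + (1 - γ) * α) 0 with hP | hP
  · have hCA : γ * β = 0 := by nlinarith [mul_nonneg hγ0 hβ, mul_nonneg h1γ hα]
    have hCB : (1 - γ) * α = 0 := by linarith
    rw [hP, mul_zero]; linear_combination (-α) * hCA - β * hCB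
  · exact div_mul_cancel₀ _ hP

theorem fanMass_zero_left (β γ : ℝ) : fanMass 0 β γ = 0 := by simp [fanMass]

theorem fanMass_zero_right (α γ : ℝ) : fanMass α 0 γ = 0 := by simp [fanMass]

theorem fanMass_comm (α β γ : ℝ) : fanMass β α (1 - γ) = fanMass α β γ := by
  unfold fanMass; ring_nf

theorem fanMass_self (hα : 0 ≤ α) (γ : ℝ) : fanMass α α γ = α := by
  rcases hα.eq_or_lt with rfl | hα
  · exact fanMass_zero_left 0 γ
  · rw [fanMass, show γ * α + (1 - γ) * α = α by ring, mul_div_cancel_right₀ _ hα.ne']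

theorem div_add_div_fanMass (hα : 0 < α) (hβ : 0 < β) (hγ0 : 0 ≤ γ) (hγ1 : γ ≤ 1) :
    γ * fanMass α β γ / α + (1 - γ) * fanMass α β γ / β = 1 := by
  have h := fanMass_mul hα.le hβ.le hγ0 hγ1
  field_simp
  linear_combination h

end FanMass

section BridgeMass

variable {α β γ δ : ℝ}

noncomputable def bridgeMass (α β γ δ : ℝ) : ℝ :=
  1 - fanMass α β γ - fanMass (1 - α) (1 - β) δ

def bridgeNumerator (α β γ δ : ℝ) : ℝ :=
  β * γ * (1 - δ) - α * δ * (1 - γ) - α * β * (γ - δ)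

theorem bridgeMass_comm (α β γ δ : ℝ) : bridgeMass β α (1 - γ) (1 - δ) = bridgeMass α β γ δ := by
  simp only [bridgeMass, fanMass_comm]

theorem bridgeMass_self (hα0 : 0 ≤ α) (hα1 : α ≤ 1) (γ δ : ℝ) : bridgeMass α α γ δ = 0 := by
  rw [bridgeMass, fanMass_self hα0, fanMass_self (sub_nonneg.2 hα1)]; ring

theorem div_add_div_add_bridgeMass (hα0 : 0 ≤ α) (hαβ : α < β) (hβ1 : β ≤ 1) (hγ0 : 0 ≤ γ)
    (hγ1 : γ ≤ 1) (hδ0 : 0 ≤ δ) (hδ1 : δ ≤ 1) :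
    (1 - γ) * fanMass α β γ / β + δ * fanMass (1 - α) (1 - β) δ / (1 - α) +
      bridgeMass α β γ δ / (β - α) = 1 := by
  have hρ := fanMass_mul hα0 (hα0.trans hαβ.le) hγ0 hγ1
  have hρ' := fanMass_mul (by linarith : 0 ≤ 1 - α) (sub_nonneg.2 hβ1) hδ0 hδ1
  have hβ : β ≠ 0 := by linarith
  have h1α : 1 - α ≠ 0 := by linarith
  have hβα : β - α ≠ 0 := by linarith
  rw [bridgeMass]
  field_simp
  linear_combination (α - 1) * hρ - β * hρ'

theorem bridgeMass_mul (hα0 : 0 ≤ α) (hα1 : α ≤ 1) (hβ0 : 0 ≤ β) (hβ1 : β ≤ 1) (hγ0 : 0 ≤ γ)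
    (hγ1 : γ ≤ 1) (hδ0 : 0 ≤ δ) (hδ1 : δ ≤ 1) :
    bridgeMass α β γ δ * ((γ * β + (1 - γ) * α) * (δ * (1 - β) + (1 - δ) * (1 - α))) =
      (β - α) * bridgeNumerator α β γ δ := by
  have hρ := fanMass_mul hα0 hβ0 hγ0 hγ1
  have hρ' := fanMass_mul (sub_nonneg.2 hα1) (sub_nonneg.2 hβ1) hδ0 hδ1
  rw [bridgeMass, bridgeNumerator]
  linear_combination (-(δ * (1 - β) + (1 - δ) * (1 - α))) * hρ - (γ * β + (1 - γ) * α) * hρ'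

theorem bridgeMass_nonneg_of (hα0 : 0 ≤ α) (hα1 : α ≤ 1) (hβ0 : 0 ≤ β) (hβ1 : β ≤ 1)
    (hγ0 : 0 ≤ γ) (hγ1 : γ ≤ 1) (hδ0 : 0 ≤ δ) (hδ1 : δ ≤ 1)
    (h : 0 ≤ (β - α) * bridgeNumerator α β γ δ) : 0 ≤ bridgeMass α β γ δ := by
  have h1α := sub_nonneg.2 hα1
  have h1β := sub_nonneg.2 hβ1
  have h1γ := sub_nonneg.2 hγ1
  have h1δ := sub_nonneg.2 hδ1
  have hρ := fanMass_le_one hα0 hα1 hβ0 hβ1 hγ0 hγ1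
  have hρ' := fanMass_le_one h1α (by linarith) h1β (by linarith) hδ0 hδ1
  rcases (show 0 ≤ γ * β + (1 - γ) * α by positivity).eq_or_lt with hP | hP
  · have : fanMass α β γ = 0 := by rw [fanMass, ← hP, div_zero]
    rw [bridgeMass, this]; linarith
  rcases (show 0 ≤ δ * (1 - β) + (1 - δ) * (1 - α) by positivity).eq_or_lt with hP' | hP'
  · have : fanMass (1 - α) (1 - β) δ = 0 := by rw [fanMass, ← hP', div_zero]
    rw [bridgeMass, this]; linarith
  refine nonneg_of_mul_nonneg_left ?_ (mul_pos hP hP')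
  rwa [bridgeMass_mul hα0 hα1 hβ0 hβ1 hγ0 hγ1 hδ0 hδ1]

theorem bridgeNumerator_swap (α β γ δ : ℝ) :
    bridgeNumerator γ δ α β = -bridgeNumerator α β γ δ := by
  unfold bridgeNumerator; ring

theorem bridgeNumerator_nonpos (hα1 : α ≤ 1) (hβ0 : 0 ≤ β) (hγ0 : 0 ≤ γ) (hδ1 : δ ≤ 1)
    (hβα : β ≤ α) (hγδ : γ ≤ δ) : bridgeNumerator α β γ δ ≤ 0 := by
  unfold bridgeNumerator
  nlinarith [mul_le_mul_of_nonneg_right hβα (mul_nonneg hγ0 (sub_nonneg.2 hδ1)),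
    mul_le_mul_of_nonneg_right (hβα.trans hα1) (mul_nonneg (hβ0.trans hβα) (sub_nonneg.2 hγδ))]

theorem bridgeMass_nonneg_or (hα0 : 0 ≤ α) (hα1 : α ≤ 1) (hβ0 : 0 ≤ β) (hβ1 : β ≤ 1)
    (hγ0 : 0 ≤ γ) (hγ1 : γ ≤ 1) (hδ0 : 0 ≤ δ) (hδ1 : δ ≤ 1) :
    0 ≤ bridgeMass α β γ δ ∨ 0 ≤ bridgeMass γ δ α β := by
  set N := bridgeNumerator α β γ δ
  have hneg : β ≤ α → γ ≤ δ → N ≤ 0 := bridgeNumerator_nonpos hα1 hβ0 hγ0 hδ1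
  have hpos : α ≤ β → δ ≤ γ → 0 ≤ N := fun hαβ hδγ => by
    have := bridgeNumerator_nonpos hγ1 hδ0 hα0 hβ1 hδγ hαβ
    rw [bridgeNumerator_swap] at this; linarith
  have : 0 ≤ (β - α) * N ∨ 0 ≤ (δ - γ) * -N := by
    rcases le_total α β with hαβ | hβα <;> rcases le_total γ δ with hγδ | hδγ
    · rcases le_total 0 N with hN | hN
      · exact Or.inl (mul_nonneg (sub_nonneg.2 hαβ) hN)
      · exact Or.inr (mul_nonneg (sub_nonneg.2 hγδ) (neg_nonneg.2 hN))
    · exact Or.inl (mul_nonneg (sub_nonneg.2 hαβ) (hpos hαβ hδγ))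
    · exact Or.inl (mul_nonneg_of_nonpos_of_nonpos (sub_nonpos.2 hβα) (hneg hβα hγδ))
    · rcases le_total 0 N with hN | hN
      · exact Or.inr (mul_nonneg_of_nonpos_of_nonpos (sub_nonpos.2 hδγ) (neg_nonpos.2 hN))
      · exact Or.inl (mul_nonneg_of_nonpos_of_nonpos (sub_nonpos.2 hβα) hN)
  refine this.imp (bridgeMass_nonneg_of hα0 hα1 hβ0 hβ1 hγ0 hγ1 hδ0 hδ1) fun h => ?_
  exact bridgeMass_nonneg_of hγ0 hγ1 hδ0 hδ1 hα0 hα1 hβ0 hβ1 (by rwa [bridgeNumerator_swap])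

end BridgeMass

section FiveSegments

variable {α β γ δ : ℝ}

/-- The weights of the segments `CA, CB, AD, BD, AB`; their endpoints are `![C, C, A, B, A]` and
`![A, B, D, D, B]`, with normalised `F`-values `![0, 0, α, β, α]`, `![α, β, 1, 1, β]` and
`G`-values `![γ, γ, 0, 1, 0]`, `![0, 1, δ, δ, 1]`. -/
noncomputable def fiveSegmentWeight (α β γ δ : ℝ) : Fin 5 → ℝ :=
  ![γ * fanMass α β γ, (1 - γ) * fanMass α β γ, δ * fanMass (1 - α) (1 - β) δ,
    (1 - δ) * fanMass (1 - α) (1 - β) δ, bridgeMass α β γ δ]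

theorem fiveSegmentWeight_nonneg (hα0 : 0 ≤ α) (hα1 : α ≤ 1) (hβ0 : 0 ≤ β) (hβ1 : β ≤ 1)
    (hγ0 : 0 ≤ γ) (hγ1 : γ ≤ 1) (hδ0 : 0 ≤ δ) (hδ1 : δ ≤ 1) (ht : 0 ≤ bridgeMass α β γ δ)
    (k : Fin 5) :
    0 ≤ fiveSegmentWeight α β γ δ k := by
  have hρ := fanMass_nonneg hα0 hβ0 hγ0 hγ1
  have hρ' := fanMass_nonneg (sub_nonneg.2 hα1) (sub_nonneg.2 hβ1) hδ0 hδ1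
  have := sub_nonneg.2 hγ1
  have := sub_nonneg.2 hδ1
  fin_cases k <;> simp only [fiveSegmentWeight, Fin.zero_eta, Fin.mk_one, Fin.reduceFinMk, Matrix.cons_val_zero,
    Matrix.cons_val_one, Matrix.cons_val] <;> positivity

theorem sum_fiveSegmentWeight (α β γ δ : ℝ) : ∑ k, fiveSegmentWeight α β γ δ k = 1 := by
  simp only [Fin.sum_univ_five, fiveSegmentWeight, bridgeMass, Matrix.cons_val_zero,
    Matrix.cons_val_one, Matrix.cons_val]
  ring

theorem fiveSegmentWeight_eq_zero_of_fst (hβ0 : 0 ≤ β) (hβ1 : β ≤ 1) {k : Fin 5}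
    (hk : ![0, 0, α, β, α] k = ![α, β, 1, 1, β] k) : fiveSegmentWeight α β γ δ k = 0 := by
  fin_cases k <;> simp only [fiveSegmentWeight, Fin.zero_eta, Fin.mk_one, Fin.reduceFinMk, Matrix.cons_val_zero,
    Matrix.cons_val_one, Matrix.cons_val] at hk ⊢
  · rw [← hk, fanMass_zero_left, mul_zero]
  · rw [← hk, fanMass_zero_right, mul_zero]
  · rw [hk, sub_self, fanMass_zero_left, mul_zero]
  · rw [hk, sub_self, fanMass_zero_right, mul_zero]
  · rw [hk, bridgeMass_self hβ0 hβ1]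

theorem fiveSegmentWeight_eq_zero_of_snd {k : Fin 5}
    (hk : ![γ, γ, 0, 1, 0] k = ![0, 1, δ, δ, 1] k) : fiveSegmentWeight α β γ δ k = 0 := by
  fin_cases k <;> simp only [fiveSegmentWeight, Fin.zero_eta, Fin.mk_one, Fin.reduceFinMk, Matrix.cons_val_zero,
    Matrix.cons_val_one, Matrix.cons_val] at hk ⊢
  · rw [hk, zero_mul]
  · rw [hk, sub_self, zero_mul]
  · rw [← hk, zero_mul]
  · rw [← hk, sub_self, zero_mul]
  · exact absurd hk zero_ne_one

theorem segmentDensity_fiveSegment_fst_le (hα0 : 0 ≤ α) (hα1 : α ≤ 1) (hβ0 : 0 ≤ β)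
    (hβ1 : β ≤ 1) (hγ0 : 0 ≤ γ) (hγ1 : γ ≤ 1) (hδ0 : 0 ≤ δ) (hδ1 : δ ≤ 1) {x : ℝ} (hxα : x ≠ α)
    (hxβ : x ≠ β) :
    segmentDensity (fiveSegmentWeight α β γ δ) ![0, 0, α, β, α] ![α, β, 1, 1, β] x ≤ 1 := by
  by_cases hx : x ∉ Icc 0 1
  · refine (segmentDensity_eq_zero_of_notMem (fun k => ?_) (fun k => ?_) hx).trans_le zero_le_one
    all_goals fin_cases k <;> simp [*]
  obtain ⟨hx0, hx1⟩ := not_not.1 hx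
  refine le_of_eq ?_
  rcases hxα.lt_or_gt with hxα | hαx <;> rcases hxβ.lt_or_gt with hxβ | hβx
  · have hα := hx0.trans_lt hxα
    have hβ := hx0.trans_lt hxβ
    simpa [segmentDensity, Fin.sum_univ_five, fiveSegmentWeight, mem_uIcc, hx0, hxα.le, hxβ.le,
      not_le.2 hxα, not_le.2 hxβ, not_le.2 (hxα.trans_le hα1), abs_of_pos hα, abs_of_pos hβ]
      using div_add_div_fanMass hα hβ hγ0 hγ1
  · have hβα := hβx.trans hxα
    have h := div_add_div_add_bridgeMass hβ0 hβα hα1 (sub_nonneg.2 hγ1) (sub_le_self _ hγ0)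
      (sub_nonneg.2 hδ1) (sub_le_self _ hδ0)
    rw [sub_sub_cancel, fanMass_comm, fanMass_comm, bridgeMass_comm] at h
    simpa [segmentDensity, Fin.sum_univ_five, fiveSegmentWeight, mem_uIcc, hx0, hx1, hxα.le, hβx.le,
      not_le.2 hxα, not_le.2 hβx, not_le.2 (hβ0.trans_lt hβx), not_le.2 (hxα.trans_le hα1),
      abs_of_pos (hβ0.trans_lt hβα), abs_of_pos (sub_pos.2 (hβx.trans_le hx1)),
      abs_of_neg (sub_neg.2 hβα)] using h
  · have hαβ := hαx.trans hxβ
    simpa [segmentDensity, Fin.sum_univ_five, fiveSegmentWeight, mem_uIcc, hx0, hx1, hαx.le, hxβ.le,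
      not_le.2 hαx, not_le.2 hxβ, not_le.2 (hα0.trans_lt hαx), not_le.2 (hxβ.trans_le hβ1),
      abs_of_pos (hα0.trans_lt hαβ), abs_of_pos (sub_pos.2 (hαx.trans_le hx1)),
      abs_of_pos (sub_pos.2 hαβ)] using div_add_div_add_bridgeMass hα0 hαβ hβ1 hγ0 hγ1 hδ0 hδ1
  · have hα := sub_pos.2 (hαx.trans_le hx1)
    have hβ := sub_pos.2 (hβx.trans_le hx1)
    simpa [segmentDensity, Fin.sum_univ_five, fiveSegmentWeight, mem_uIcc, hx1, hαx.le, hβx.le,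
      not_le.2 hαx, not_le.2 hβx, not_le.2 (hα0.trans_lt hαx), abs_of_pos hα, abs_of_pos hβ]
      using div_add_div_fanMass hα hβ hδ0 hδ1

theorem segmentDensity_fiveSegment_snd_le (hγ0 : 0 ≤ γ) (hγ1 : γ ≤ 1) (hδ0 : 0 ≤ δ)
    (hδ1 : δ ≤ 1) {x : ℝ} (hxγ : x ≠ γ) (hxδ : x ≠ δ) :
    segmentDensity (fiveSegmentWeight α β γ δ) ![γ, γ, 0, 1, 0] ![0, 1, δ, δ, 1] x ≤ 1 := by
  by_cases hx : x ∉ Icc 0 1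
  · refine (segmentDensity_eq_zero_of_notMem (fun k => ?_) (fun k => ?_) hx).trans_le zero_le_one
    all_goals fin_cases k <;> simp [*]
  obtain ⟨hx0, hx1⟩ := not_not.1 hx
  refine le_of_eq ?_
  have hρ : fanMass α β γ + fanMass (1 - α) (1 - β) δ + bridgeMass α β γ δ = 1 := by
    rw [bridgeMass]; ring
  rcases hxγ.lt_or_gt with hxγ | hγx <;> rcases hxδ.lt_or_gt with hxδ | hδx
  · have hγ : 0 < γ := hx0.trans_lt hxγ
    have hδ : 0 < δ := hx0.trans_lt hxδ
    simpa [segmentDensity, Fin.sum_univ_five, fiveSegmentWeight, mem_uIcc, hx0, hx1, hxγ.le, hxδ.le,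
      not_le.2 hxγ, not_le.2 hxδ, not_le.2 (hxγ.trans_le hγ1), abs_of_pos hγ, abs_of_pos hδ,
      hγ.ne', hδ.ne']
      using hρ
  · have hγ : 0 < γ := hx0.trans_lt hxγ
    have hδ : 0 < 1 - δ := sub_pos.2 (hδx.trans_le hx1)
    simpa [segmentDensity, Fin.sum_univ_five, fiveSegmentWeight, mem_uIcc, hx0, hx1, hxγ.le, hδx.le,
      not_le.2 hxγ, not_le.2 hδx, not_le.2 (hxγ.trans_le hγ1), not_le.2 (hδ0.trans_lt hδx),
      abs_of_pos hγ, abs_sub_comm δ, abs_of_pos hδ, hγ.ne', hδ.ne']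
      using hρ
  · have hγ : 0 < 1 - γ := sub_pos.2 (hγx.trans_le hx1)
    have hδ : 0 < δ := hx0.trans_lt hxδ
    simpa [segmentDensity, Fin.sum_univ_five, fiveSegmentWeight, mem_uIcc, hx0, hx1, hγx.le, hxδ.le,
      not_le.2 hγx, not_le.2 hxδ, not_le.2 (hγ0.trans_lt hγx), not_le.2 (hxδ.trans_le hδ1),
      abs_of_pos hγ, abs_of_pos hδ, hγ.ne', hδ.ne']
      using hρ
  · have hγ : 0 < 1 - γ := sub_pos.2 (hγx.trans_le hx1)
    have hδ : 0 < 1 - δ := sub_pos.2 (hδx.trans_le hx1)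
    simpa [segmentDensity, Fin.sum_univ_five, fiveSegmentWeight, mem_uIcc, hx0, hx1, hγx.le, hδx.le,
      not_le.2 hγx, not_le.2 hδx, not_le.2 (hγ0.trans_lt hγx), abs_of_pos hγ, abs_sub_comm δ,
      abs_of_pos hδ, hγ.ne', hδ.ne']
      using hρ

end FiveSegments

theorem sSup_image_sub_sInf_image {E : Type*} {K : Set E} {f : E → ℝ} {a b : E} (ha : a ∈ K)
    (hb : b ∈ K) (hmin : IsMinOn f K a) (hmax : IsMaxOn f K b) :
    sSup (f '' K) - sInf (f '' K) = f b - f a := by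
  rw [IsGreatest.csSup_eq ⟨mem_image_of_mem f hb, forall_mem_image.2 fun x hx => hmax hx⟩,
    IsLeast.csInf_eq ⟨mem_image_of_mem f ha, forall_mem_image.2 fun x hx => hmin hx⟩]

theorem sub_div_sub_mem_Icc {a b x : ℝ} (hab : a < b) (hax : a ≤ x) (hxb : x ≤ b) :
    (x - a) / (b - a) ∈ Icc 0 1 :=
  ⟨div_nonneg (sub_nonneg.2 hax) (sub_pos.2 hab).le,
    (div_le_one (sub_pos.2 hab)).2 (sub_le_sub_right hxb a)⟩

theorem one_le_sum_div_of_bridgeMass_nonneg {E : Type*} [AddCommGroup E] [Module ℝ E]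
    {K : Set E} (hK : Convex ℝ K) {F G : E →ₗ[ℝ] ℝ} {pC pD pA pB : E} (hpC : pC ∈ K)
    (hpD : pD ∈ K) (hpA : pA ∈ K) (hpB : pB ∈ K) (hC : IsMinOn F K pC) (hD : IsMaxOn F K pD)
    (hA : IsMinOn G K pA) (hB : IsMaxOn G K pB) (hF : F pC < F pD) (hG : G pA < G pB)
    (ht : 0 ≤ bridgeMass ((F pA - F pC) / (F pD - F pC)) ((F pB - F pC) / (F pD - F pC))
      ((G pC - G pA) / (G pB - G pA)) ((G pD - G pA) / (G pB - G pA)))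
    {κ : Type*} [Fintype κ] {g : κ → E →ₗ[ℝ] ℝ} (hg : ∀ i, g i = F ∨ g i = G) {c d : κ → ℝ}
    (hcd : ∀ i, c i ≤ d i) (hcover : K ⊆ ⋃ i, {x | c i ≤ g i x ∧ g i x ≤ d i}) :
    1 ≤ ∑ i, (d i - c i) / (sSup (g i '' K) - sInf (g i '' K)) := by
  set sF := F pD - F pC
  set sG := G pB - G pA
  set α := (F pA - F pC) / sF
  set β := (F pB - F pC) / sF
  set γ := (G pC - G pA) / sG
  set δ := (G pD - G pA) / sG
  obtain ⟨hα0, hα1⟩ := sub_div_sub_mem_Icc hF (hC hpA) (hD hpA)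
  obtain ⟨hβ0, hβ1⟩ := sub_div_sub_mem_Icc hF (hC hpB) (hD hpB)
  obtain ⟨hγ0, hγ1⟩ := sub_div_sub_mem_Icc hG (hA hpC) (hB hpC)
  obtain ⟨hδ0, hδ1⟩ := sub_div_sub_mem_Icc hG (hA hpD) (hB hpD)
  have hsF : 0 < sF := sub_pos.2 hF
  have hsG : 0 < sG := sub_pos.2 hG
  set p : Fin 5 → E := ![pC, pC, pA, pB, pA]
  set q : Fin 5 → E := ![pA, pB, pD, pD, pB]
  have hFp : (fun k => F (p k)) = fun k => F pC + sF * ![0, 0, α, β, α] k := by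
    funext k; fin_cases k <;> simp [p, α, β, mul_div_cancel₀ _ hsF.ne']
  have hFq : (fun k => F (q k)) = fun k => F pC + sF * ![α, β, 1, 1, β] k := by
    funext k; fin_cases k <;> simp [q, α, β, mul_div_cancel₀ _ hsF.ne', sF]
  have hGp : (fun k => G (p k)) = fun k => G pA + sG * ![γ, γ, 0, 1, 0] k := by
    funext k; fin_cases k <;> simp [p, γ, mul_div_cancel₀ _ hsG.ne', sG]
  have hGq : (fun k => G (q k)) = fun k => G pA + sG * ![0, 1, δ, δ, 1] k := by
    funext k; fin_cases k <;> simp [q, δ, mul_div_cancel₀ _ hsG.ne', sG]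
  have hp : ∀ k, p k ∈ K := fun k => by fin_cases k <;> assumption
  have hq : ∀ k, q k ∈ K := fun k => by fin_cases k <;> assumption
  have key := one_le_sum_mul_of_ae_segmentDensity_le hK
    (fiveSegmentWeight_nonneg hα0 hα1 hβ0 hβ1 hγ0 hγ1 hδ0 hδ1 ht) (sum_fiveSegmentWeight α β γ δ)
    hp hq (M := fun i => (sSup (g i '' K) - sInf (g i '' K))⁻¹) hcd hcover ?_ ?_
  · simpa only [inv_mul_eq_div] using key
  · intro i k hk
    rcases hg i with h | h <;> rw [h] at hk
    · rw [congrFun hFp k, congrFun hFq k] at hk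
      exact fiveSegmentWeight_eq_zero_of_fst hβ0 hβ1 (mul_left_cancel₀ hsF.ne' (add_left_cancel hk))
    · rw [congrFun hGp k, congrFun hGq k] at hk
      exact fiveSegmentWeight_eq_zero_of_snd (mul_left_cancel₀ hsG.ne' (add_left_cancel hk))
  · intro i
    rcases hg i with h | h <;> simp only [h]
    · rw [hFp, hFq, sSup_image_sub_sInf_image hpC hpD hC hD]
      exact ae_segmentDensity_affine_le _ hsF ((countable_singleton β).insert α) fun x hx =>
        segmentDensity_fiveSegment_fst_le hα0 hα1 hβ0 hβ1 hγ0 hγ1 hδ0 hδ1 (fun h => hx (Or.inl h))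
          (fun h => hx (Or.inr h))
    · rw [hGp, hGq, sSup_image_sub_sInf_image hpA hpB hA hB]
      exact ae_segmentDensity_affine_le _ hsG ((countable_singleton δ).insert γ) fun x hx =>
        segmentDensity_fiveSegment_snd_le hγ0 hγ1 hδ0 hδ1 (fun h => hx (Or.inl h))
          (fun h => hx (Or.inr h))

theorem apply_lt_of_isMinOn_of_isMaxOn {E : Type*} [AddCommGroup E] [Module ℝ E]
    [TopologicalSpace E] [IsTopologicalAddGroup E] [ContinuousSMul ℝ E] {K : Set E}
    (hK : (interior K).Nonempty) {f : E →ₗ[ℝ] ℝ} (hf : f ≠ 0) {a b : E} (hmin : IsMinOn f K a)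
    (hmax : IsMaxOn f K b) : f a < f b := by
  by_contra! hba
  obtain ⟨x, hx⟩ := hK
  have hsub : (f '' interior K).Subsingleton := by
    rintro _ ⟨y, hy, rfl⟩ _ ⟨z, hz, rfl⟩
    have hy : f a ≤ f y ∧ f y ≤ f b := ⟨hmin (interior_subset hy), hmax (interior_subset hy)⟩
    have hz : f a ≤ f z ∧ f z ≤ f b := ⟨hmin (interior_subset hz), hmax (interior_subset hz)⟩
    linarith
  have hopen : IsOpen (f '' interior K) :=
    f.isOpenMap_of_finiteDimensional (LinearMap.surjective_of_ne_zero hf) _ isOpen_interior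
  rw [hsub.eq_singleton_of_mem (mem_image_of_mem f hx)] at hopen
  exact not_isOpen_singleton _ hopen

/-- The Bang conjecture for planks whose normals have only two distinct
directions: if a convex body `K ⊆ ℝⁿ` is covered by planks `P i = {x : c i ≤ f (j i) x ≤ d i}`,
where `f 0, f 1` are two nonzero linear functionals, then the sum of the relative widths
`(d i − c i)/(max_{x∈K} f (j i) x − min_{x∈K} f (j i) x)` is at least `1`. -/
theorem bang_two_directions
    {n : ℕ} (K : Set (Fin n → ℝ)) (hK : IsCompact K) (hKconv : Convex ℝ K)
    (hKint : (interior K).Nonempty)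
    (f : Fin 2 → ((Fin n → ℝ) →ₗ[ℝ] ℝ)) (hf : ∀ k, f k ≠ 0)
    (m : ℕ) (j : Fin m → Fin 2) (c d : Fin m → ℝ) (hcd : ∀ i, c i ≤ d i)
    (hcover : K ⊆ ⋃ i, {x | c i ≤ f (j i) x ∧ f (j i) x ≤ d i}) :
    1 ≤ ∑ i, (d i - c i) / (sSup (⇑(f (j i)) '' K) - sInf (⇑(f (j i)) '' K)) := by
  have hne : K.Nonempty := hKint.mono interior_subset
  have hcont : ∀ k, ContinuousOn (f k) K := fun k =>
    (f k).continuous_of_finiteDimensional.continuousOn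
  obtain ⟨pC, hpC, hC⟩ := hK.exists_isMinOn hne (hcont 0)
  obtain ⟨pD, hpD, hD⟩ := hK.exists_isMaxOn hne (hcont 0)
  obtain ⟨pA, hpA, hA⟩ := hK.exists_isMinOn hne (hcont 1)
  obtain ⟨pB, hpB, hB⟩ := hK.exists_isMaxOn hne (hcont 1)
  have h0 := apply_lt_of_isMinOn_of_isMaxOn hKint (hf 0) hC hD
  have h1 := apply_lt_of_isMinOn_of_isMaxOn hKint (hf 1) hA hB
  have hj : ∀ i, f (j i) = f 0 ∨ f (j i) = f 1 := fun i =>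
    (Fin.forall_fin_two.2 ⟨Or.inl rfl, Or.inr rfl⟩ : ∀ k : Fin 2, f k = f 0 ∨ f k = f 1) (j i)
  obtain ⟨hα0, hα1⟩ := sub_div_sub_mem_Icc h0 (hC hpA) (hD hpA)
  obtain ⟨hβ0, hβ1⟩ := sub_div_sub_mem_Icc h0 (hC hpB) (hD hpB)
  obtain ⟨hγ0, hγ1⟩ := sub_div_sub_mem_Icc h1 (hA hpC) (hB hpC)
  obtain ⟨hδ0, hδ1⟩ := sub_div_sub_mem_Icc h1 (hA hpD) (hB hpD)
  rcases bridgeMass_nonneg_or hα0 hα1 hβ0 hβ1 hγ0 hγ1 hδ0 hδ1 with ht | ht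
  · exact one_le_sum_div_of_bridgeMass_nonneg hKconv hpC hpD hpA hpB hC hD hA hB h0 h1 ht hj hcd
      hcover
  · exact one_le_sum_div_of_bridgeMass_nonneg hKconv hpA hpB hpC hpD hA hB hC hD h1 h0 ht
      (fun i => (hj i).symm) hcd hcover
end

section
/- Let n_1, …, n_N be unit vectors in Euclidean space ℝ^d, let c ≥ 0, and assume ⟨n_i, n_j⟩ ≥ c for all i ≠ j. Let P_i = {x ∈ ℝ^d : |⟨x, n_i⟩ − b_i| ≤ w_i/2} be planks of widths w_i > 0, and let k be a positive integer such that every point of the closed Euclidean unit ball B is contained in at least k of the planks P_i. Then Σ_{i=1}^{N} w_i ≥ 2 √( (c(k − 1) + 1) k ). -/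
/-!
Walk from the origin in steps of length `h`, each in the direction of the sum `v` of the normals
of `k` planks containing the current point. Pairwise `⟪n i, n j⟫ ≥ c` gives
`‖v‖ ≥ ρ := √((c(k-1)+1)k)`, and `c ≥ 0` makes every coordinate `⟪z, n i⟫` nondecreasing along
the walk. A step raises the sum of the chosen coordinates by `h‖v‖ ≥ hρ`, while coordinate `i`
only grows while `z` lies in plank `i`, hence by at most the length of the part of that plank on
the positive side of the origin, plus `h`. Leaving the unit ball takes at least `1/h` steps, so
`ρ` is bounded by the total positive length of the planks, up to `Nh`. The same bound for the
reflected planks covers the negative sides, and `h → 0`.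
-/

open Finset RealInnerProductSpace

theorem sum_sub_le_of_monotone {g : ℕ → ℝ} (hg : Monotone g) {h lo hi : ℝ}
    (hstep : ∀ j, g (j + 1) ≤ g j + h) (S : Finset ℕ) (hS : ∀ j ∈ S, lo ≤ g j ∧ g j ≤ hi) :
    ∑ j ∈ S, (g (j + 1) - g j) ≤ max 0 (hi + h - max lo (g 0)) := by
  rcases S.eq_empty_or_nonempty with rfl | hne
  · simp
  set ja := S.min' hne
  set jb := S.max' hne
  have hjab : ja ≤ jb + 1 := (S.min'_le_max' hne).trans jb.le_succ
  have hsub : S ⊆ Ico ja (jb + 1) := fun j hj =>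
    mem_Ico.2 ⟨S.min'_le j hj, Nat.lt_succ_of_le (S.le_max' j hj)⟩
  calc ∑ j ∈ S, (g (j + 1) - g j)
      ≤ ∑ j ∈ Ico ja (jb + 1), (g (j + 1) - g j) :=
        sum_le_sum_of_subset_of_nonneg hsub fun j _ _ => sub_nonneg.2 (hg j.le_succ)
    _ = g (jb + 1) - g ja := sum_Ico_sub g hjab
    _ ≤ hi + h - max lo (g 0) := by
        have hlo : max lo (g 0) ≤ g ja := max_le (hS ja (S.min'_mem hne)).1 (hg ja.zero_le)
        linarith [(hS jb (S.max'_mem hne)).2, hstep jb]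
    _ ≤ _ := le_max_right _ _

section Walk

variable {E : Type*} [NormedAddCommGroup E] [InnerProductSpace ℝ E]

noncomputable def normalizedWalk (v : E → E) (h : ℝ) : ℕ → E
  | 0 => 0
  | j + 1 => normalizedWalk v h j + (h / ‖v (normalizedWalk v h j)‖) • v (normalizedWalk v h j)

variable {v : E → E} {h : ℝ}

theorem normalizedWalk_succ_sub (j : ℕ) :
    normalizedWalk v h (j + 1) - normalizedWalk v h j
      = (h / ‖v (normalizedWalk v h j)‖) • v (normalizedWalk v h j) :=
  add_sub_cancel_left _ _

theorem norm_normalizedWalk_succ_sub_le (hh : 0 ≤ h) (j : ℕ) :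
    ‖normalizedWalk v h (j + 1) - normalizedWalk v h j‖ ≤ h := by
  rw [normalizedWalk_succ_sub, norm_smul, norm_div, Real.norm_of_nonneg hh, norm_norm]
  rcases eq_or_ne ‖v (normalizedWalk v h j)‖ 0 with h0 | h0
  · simp [h0, hh]
  · rw [div_mul_cancel₀ _ h0]

theorem norm_normalizedWalk_le (hh : 0 ≤ h) (j : ℕ) : ‖normalizedWalk v h j‖ ≤ j * h := by
  induction j with
  | zero => simp [normalizedWalk]
  | succ j ih =>
    have := norm_le_norm_add_norm_sub' (normalizedWalk v h (j + 1)) (normalizedWalk v h j)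
    push_cast
    linarith [norm_normalizedWalk_succ_sub_le (v := v) hh j]

theorem exists_normalizedWalk_mem_closedBall (hh : 0 < h) :
    ∃ m : ℕ, 1 ≤ m * h ∧ ∀ j < m, ‖normalizedWalk v h j‖ ≤ 1 := by
  classical
  by_cases hexit : ∃ j, 1 < ‖normalizedWalk v h j‖
  · refine ⟨Nat.find hexit, ?_, fun j hj => not_lt.1 (Nat.find_min hexit hj)⟩
    exact (Nat.find_spec hexit).le.trans (norm_normalizedWalk_le hh.le _)
  · push Not at hexit
    refine ⟨⌈1 / h⌉₊, ?_, fun j _ => hexit j⟩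
    rw [← div_le_iff₀ hh]
    exact Nat.le_ceil _

theorem inner_normalizedWalk_succ_sub (j : ℕ) (y : E) :
    ⟪normalizedWalk v h (j + 1), y⟫ - ⟪normalizedWalk v h j, y⟫
      = h / ‖v (normalizedWalk v h j)‖ * ⟪v (normalizedWalk v h j), y⟫ := by
  rw [← inner_sub_left, normalizedWalk_succ_sub, real_inner_smul_left]

theorem monotone_inner_normalizedWalk (hh : 0 ≤ h) {y : E} (hv : ∀ x, 0 ≤ ⟪v x, y⟫) :
    Monotone fun j => ⟪normalizedWalk v h j, y⟫ := by
  refine monotone_nat_of_le_succ fun j => sub_nonneg.1 ?_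
  rw [inner_normalizedWalk_succ_sub]
  exact mul_nonneg (div_nonneg hh (norm_nonneg _)) (hv _)

theorem inner_normalizedWalk_succ_le (hh : 0 ≤ h) {y : E} (hy : ‖y‖ ≤ 1) (j : ℕ) :
    ⟪normalizedWalk v h (j + 1), y⟫ ≤ ⟪normalizedWalk v h j, y⟫ + h := by
  have hstep := (real_inner_le_norm _ y).trans
    (mul_le_mul (norm_normalizedWalk_succ_sub_le (v := v) hh j) hy (norm_nonneg _) hh)
  rw [inner_sub_left] at hstep
  linarith

theorem sum_inner_normalizedWalk_succ_sub {ι : Type*} (n : ι → E) (I : Finset ι) {j : ℕ}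
    (hv : v (normalizedWalk v h j) = ∑ i ∈ I, n i) :
    ∑ i ∈ I, (⟪normalizedWalk v h (j + 1), n i⟫ - ⟪normalizedWalk v h j, n i⟫)
      = h * ‖∑ i ∈ I, n i‖ := by
  simp_rw [← inner_sub_left]
  rw [← inner_sum, normalizedWalk_succ_sub, hv, real_inner_smul_left, real_inner_self_eq_norm_sq]
  rcases eq_or_ne ‖∑ i ∈ I, n i‖ 0 with h0 | h0
  · simp [h0]
  · field_simp

end Walk

section UnitVectors

variable {E : Type*} [NormedAddCommGroup E] [InnerProductSpace ℝ E] {ι : Type*}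
  {n : ι → E} {c : ℝ}

theorem inner_sum_nonneg_of_le_inner (hn : ∀ i, ‖n i‖ = 1) (hc : 0 ≤ c)
    (hpar : ∀ i j, i ≠ j → c ≤ ⟪n i, n j⟫) (I : Finset ι) (j : ι) :
    0 ≤ ⟪∑ i ∈ I, n i, n j⟫ := by
  rw [sum_inner]
  refine sum_nonneg fun i _ => ?_
  rcases eq_or_ne i j with rfl | hij
  · simp [hn]
  · exact hc.trans (hpar i j hij)

theorem le_norm_sum_sq_of_le_inner (hn : ∀ i, ‖n i‖ = 1)
    (hpar : ∀ i j, i ≠ j → c ≤ ⟪n i, n j⟫) (I : Finset ι) :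
    (c * ((#I : ℝ) - 1) + 1) * #I ≤ ‖∑ i ∈ I, n i‖ ^ 2 := by
  classical
  have hrow : ∀ i ∈ I, 1 + ((#I : ℝ) - 1) * c ≤ ∑ j ∈ I, ⟪n i, n j⟫ := by
    intro i hi
    rw [← add_sum_erase _ _ hi, real_inner_self_eq_norm_sq, hn, one_pow]
    have hoff := card_nsmul_le_sum (I.erase i) (fun j => ⟪n i, n j⟫) c
      fun j hj => hpar i j (ne_of_mem_erase hj).symm
    rw [nsmul_eq_mul, card_erase_of_mem hi, Nat.cast_pred (card_pos.2 ⟨i, hi⟩)] at hoff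
    linarith
  calc (c * ((#I : ℝ) - 1) + 1) * #I = ∑ _i ∈ I, (1 + ((#I : ℝ) - 1) * c) := by
        rw [sum_const, nsmul_eq_mul]; ring
    _ ≤ ∑ i ∈ I, ∑ j ∈ I, ⟪n i, n j⟫ := sum_le_sum hrow
    _ = ‖∑ i ∈ I, n i‖ ^ 2 := by
        rw [← real_inner_self_eq_norm_sq, sum_inner]
        simp_rw [inner_sum]

end UnitVectors

/-- The length of the part of `[b - w / 2, b + w / 2 + h]` lying in `[0, ∞)`. -/
noncomputable def upperPlankLength (b w h : ℝ) : ℝ := max 0 (b + w / 2 + h - max (b - w / 2) 0)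

theorem upperPlankLength_add_upperPlankLength_neg {b w h : ℝ} (hw : 0 ≤ w) (hh : 0 ≤ h) :
    upperPlankLength b w h + upperPlankLength (-b) w h ≤ w + 2 * h := by
  unfold upperPlankLength
  rcases le_total (b - w / 2) 0 with h1 | h1 <;> rcases le_total (-b - w / 2) 0 with h2 | h2 <;>
    simp only [max_def] <;> split_ifs <;> linarith

theorem sqrt_le_sum_upperPlankLength {E : Type*} [NormedAddCommGroup E] [InnerProductSpace ℝ E]
    {ι : Type*} [Fintype ι] {n : ι → E} {c : ℝ} (hn : ∀ i, ‖n i‖ = 1) (hc : 0 ≤ c)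
    (hpar : ∀ i j, i ≠ j → c ≤ ⟪n i, n j⟫) {b w : ι → ℝ} {k : ℕ}
    (hcover : ∀ x ∈ Metric.closedBall (0 : E) 1, k ≤ #{i | |⟪x, n i⟫ - b i| ≤ w i / 2})
    {h : ℝ} (hh : 0 < h) :
    √((c * ((k : ℝ) - 1) + 1) * k) ≤ ∑ i, upperPlankLength (b i) (w i) h := by
  classical
  have hsel : ∀ x : E, ∃ I : Finset ι,
      ‖x‖ ≤ 1 → #I = k ∧ ∀ i ∈ I, |⟪x, n i⟫ - b i| ≤ w i / 2 := by
    intro x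
    by_cases hx : ‖x‖ ≤ 1
    · obtain ⟨I, hIs, hIk⟩ := exists_subset_card_eq (hcover x (mem_closedBall_zero_iff.2 hx))
      exact ⟨I, fun _ => ⟨hIk, fun i hi => (mem_filter.1 (hIs hi)).2⟩⟩
    · exact ⟨∅, fun hx' => absurd hx' hx⟩
  choose sel hsel using hsel
  set z := normalizedWalk (fun x => ∑ i ∈ sel x, n i) h
  set ρ := √((c * ((k : ℝ) - 1) + 1) * k)
  obtain ⟨m, hmh, hin⟩ := exists_normalizedWalk_mem_closedBall (v := fun x => ∑ i ∈ sel x, n i) hh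
  have hgain : ∀ j ∈ range m, ρ * h ≤ ∑ i ∈ sel (z j), (⟪z (j + 1), n i⟫ - ⟪z j, n i⟫) := by
    intro j hj
    rw [sum_inner_normalizedWalk_succ_sub n _ rfl, mul_comm]
    gcongr
    have hsq := le_norm_sum_sq_of_le_inner hn hpar (sel (z j))
    rw [(hsel _ (hin j (mem_range.1 hj))).1] at hsq
    exact Real.sqrt_le_iff.2 ⟨norm_nonneg _, hsq⟩
  have hcap : ∀ i, ∑ j ∈ (range m).filter (fun j => i ∈ sel (z j)),
      (⟪z (j + 1), n i⟫ - ⟪z j, n i⟫) ≤ upperPlankLength (b i) (w i) h := by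
    intro i
    have hplank : ∀ j ∈ (range m).filter (fun j => i ∈ sel (z j)),
        b i - w i / 2 ≤ ⟪z j, n i⟫ ∧ ⟪z j, n i⟫ ≤ b i + w i / 2 := by
      intro j hj
      rw [mem_filter, mem_range] at hj
      have := abs_le.1 ((hsel _ (hin j hj.1)).2 i hj.2)
      constructor <;> linarith [this.1, this.2]
    have hsum := sum_sub_le_of_monotone
      (monotone_inner_normalizedWalk hh.le fun x => inner_sum_nonneg_of_le_inner hn hc hpar _ i)
      (inner_normalizedWalk_succ_le hh.le (hn i).le) _ hplank
    rwa [show ⟪z 0, n i⟫ = 0 from inner_zero_left _] at hsum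
  calc ρ ≤ ρ * (m * h) := le_mul_of_one_le_right (Real.sqrt_nonneg _) hmh
    _ = ∑ j ∈ range m, ρ * h := by rw [sum_const, card_range, nsmul_eq_mul]; ring
    _ ≤ ∑ j ∈ range m, ∑ i ∈ sel (z j), (⟪z (j + 1), n i⟫ - ⟪z j, n i⟫) := sum_le_sum hgain
    _ = ∑ i, ∑ j ∈ (range m).filter (fun j => i ∈ sel (z j)), (⟪z (j + 1), n i⟫ - ⟪z j, n i⟫) :=
        sum_comm' fun j i => by simp
    _ ≤ ∑ i, upperPlankLength (b i) (w i) h := sum_le_sum fun i _ => hcap i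

theorem fractional_bang_almost_parallel_general
    (d N : ℕ) (n : Fin N → EuclideanSpace ℝ (Fin d)) (hn : ∀ i, ‖n i‖ = 1)
    (c : ℝ) (hc : 0 ≤ c) (hpar : ∀ i j, i ≠ j → c ≤ (inner ℝ (n i) (n j) : ℝ))
    (b w : Fin N → ℝ) (hw : ∀ i, 0 < w i) (k : ℕ)
    (hcover : ∀ x ∈ Metric.closedBall (0 : EuclideanSpace ℝ (Fin d)) 1,
      k ≤ (Finset.univ.filter fun i => |(inner ℝ x (n i) : ℝ) - b i| ≤ w i / 2).card) :
    2 * Real.sqrt ((c * ((k : ℝ) - 1) + 1) * (k : ℝ)) ≤ ∑ i, w i := by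
  have hcover_neg : ∀ x ∈ Metric.closedBall (0 : EuclideanSpace ℝ (Fin d)) 1,
      k ≤ #{i | |⟪x, n i⟫ - -b i| ≤ w i / 2} := fun x hx => by
    simpa [inner_neg_left, abs_sub_comm, add_comm] using hcover (-x) (by simpa using hx)
  refine le_of_forall_pos_le_add fun ε hε => ?_
  set h := ε / (2 * N + 1)
  have hh : 0 < h := by positivity
  have hpair : ∑ i, upperPlankLength (b i) (w i) h + ∑ i, upperPlankLength (-b i) (w i) h
      ≤ ∑ i, w i + 2 * N * h := by
    rw [← sum_add_distrib]
    calc _ ≤ ∑ i, (w i + 2 * h) :=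
          sum_le_sum fun i _ => upperPlankLength_add_upperPlankLength_neg (hw i).le hh.le
      _ = ∑ i, w i + 2 * N * h := by
          rw [sum_add_distrib, sum_const, card_univ, Fintype.card_fin, nsmul_eq_mul]; ring
  have hNh : 2 * N * h ≤ ε := by
    rw [mul_div_assoc', div_le_iff₀ (by positivity)]; nlinarith
  linarith [sqrt_le_sum_upperPlankLength hn hc hpar hcover hh,
    sqrt_le_sum_upperPlankLength (b := fun i => -b i) hn hc hpar hcover_neg hh]

/-- Fractional Bang-type estimate for "almost parallel" planks covering the
Euclidean unit ball: if unit normals satisfy `⟨n i, n j⟩ ≥ c ≥ 0` pairwise and every point of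
the closed unit ball lies in at least `k` of the planks `P i = {x : |⟨x, n i⟩ − b i| ≤ w i /2}`,
then `Σ w i ≥ 2 √((c(k−1)+1)k)`. -/
theorem fractional_bang_almost_parallel
    (d N : ℕ) (n : Fin N → EuclideanSpace ℝ (Fin d)) (hn : ∀ i, ‖n i‖ = 1)
    (c : ℝ) (hc : 0 ≤ c) (hpar : ∀ i j, i ≠ j → c ≤ (inner ℝ (n i) (n j) : ℝ))
    (b w : Fin N → ℝ) (hw : ∀ i, 0 < w i) (k : ℕ) (hk : 0 < k)
    (hcover : ∀ x ∈ Metric.closedBall (0 : EuclideanSpace ℝ (Fin d)) 1,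
      k ≤ (Finset.univ.filter fun i => |(inner ℝ x (n i) : ℝ) - b i| ≤ w i / 2).card) :
    2 * Real.sqrt ((c * ((k : ℝ) - 1) + 1) * (k : ℝ)) ≤ ∑ i, w i :=
  fractional_bang_almost_parallel_general d N n hn c hc hpar b w hw k hcover
end

section
/- Let n ≥ 3 and suppose the closed Euclidean unit ball B^n ⊂ ℝ^n is covered by finitely many 2-dimensional Euclidean cylinders Z_1, …, Z_N, where each Z_i is the image under a Euclidean isometry of ℝ^n of a set X_i × ℝ² (identifying ℝ^n with ℝ^{n−2} × ℝ²) with X_i a convex body in ℝ^{n−2}. Then Σ_{i=1}^{N} vol_{n−2}(X_i) ≥ vol_{n−2}(B^{n−2}) = π^{n/2−1}/Γ(n/2). -/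
/-!
The shell `closedBall 0 1 \ ball 0 r` in `ℝⁿ` has volume `Vₙ (1 - rⁿ)`, where `Vₙ` is the volume
of the unit ball. Its intersection with a cylinder `X × ℝ²` fibres over `X` into planar annuli
whose squared radii differ by `1 - r²`, hence of area at most `π (1 - r²)`. Covering the shell by
the cylinders therefore gives `Vₙ (1 - rⁿ) ≤ π (1 - r²) ∑ vol X i` for all `r < 1`; comparing the
derivatives of both sides at `r = 1` yields `n Vₙ ≤ 2π ∑ vol X i`, and `n Vₙ / 2π` is the volume
`π^{n/2-1} / Γ(n/2)` of the unit ball of `ℝⁿ⁻²`.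
-/

open MeasureTheory Metric Set Filter Topology Module
open scoped ENNReal

theorem le_of_hasDerivAt_of_eventually_le_left {f g : ℝ → ℝ} {f' g' a : ℝ}
    (hf : HasDerivAt f f' a) (hg : HasDerivAt g g' a) (ha : f a = g a)
    (hle : ∀ᶠ x in 𝓝[<] a, f x ≤ g x) : g' ≤ f' := by
  have hslope := (hasDerivAt_iff_tendsto_slope.mp (hg.sub hf)).mono_left (nhdsLT_le_nhdsNE a)
  refine sub_nonpos.mp (le_of_tendsto hslope ?_)
  filter_upwards [hle, self_mem_nhdsWithin] with x hx hxa
  rw [slope_def_field, Pi.sub_apply, Pi.sub_apply, ha, sub_self, sub_zero]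
  exact div_nonpos_of_nonneg_of_nonpos (sub_nonneg.2 hx) (sub_nonpos.2 (le_of_lt hxa))

theorem nat_mul_le_two_mul_of_one_sub_pow_le {n : ℕ} {V C : ℝ}
    (h : ∀ r ∈ Ioo (0 : ℝ) 1, V * (1 - r ^ n) ≤ C * (1 - r ^ 2)) : V * n ≤ 2 * C := by
  have hf : HasDerivAt (fun r : ℝ => V * (1 - r ^ n)) (-(V * n)) 1 := by
    simpa using ((hasDerivAt_pow n 1).const_sub 1).const_mul V
  have hg : HasDerivAt (fun r : ℝ => C * (1 - r ^ 2)) (-(2 * C)) 1 := by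
    simpa [mul_comm] using ((hasDerivAt_pow 2 (1 : ℝ)).const_sub 1).const_mul C
  exact neg_le_neg_iff.mp <| le_of_hasDerivAt_of_eventually_le_left hf hg (by simp)
    (eventually_of_mem (Ioo_mem_nhdsLT zero_lt_one) h)

theorem nat_mul_sqrt_pi_pow_div_Gamma {n : ℕ} (hn : n ≠ 0) :
    n * (√Real.pi ^ n / Real.Gamma (n / 2 + 1)) =
      2 * Real.pi * (Real.pi ^ ((n : ℝ) / 2 - 1) / Real.Gamma (n / 2)) := by
  have hΓ : Real.Gamma (n / 2) ≠ 0 := (Real.Gamma_pos_of_pos (by positivity)).ne'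
  rw [Real.Gamma_add_one (by positivity), Real.rpow_sub Real.pi_pos, Real.rpow_one,
    Real.sqrt_eq_rpow, ← Real.rpow_natCast, ← Real.rpow_mul Real.pi_nonneg]
  field_simp

theorem MeasureTheory.Measure.prod_le_mul_of_fiber_le {α β : Type*} [MeasurableSpace α]
    [MeasurableSpace β] {μ : Measure α} {ν : Measure β} [SFinite ν] {s : Set (α × β)}
    (hs : MeasurableSet s) {A : Set α} (hsA : s ⊆ Prod.fst ⁻¹' A) {M : ℝ≥0∞}
    (hM : ∀ x ∈ A, ν (Prod.mk x ⁻¹' s) ≤ M) :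
    μ.prod ν s ≤ M * μ A := by
  rw [Measure.prod_apply hs]
  refine (lintegral_mono fun x => ?_).trans (lintegral_indicator_const_le A M)
  by_cases hx : x ∈ A
  · simpa [hx] using hM x hx
  · have : Prod.mk x ⁻¹' s = ∅ := eq_empty_of_forall_notMem fun y hy => hx (hsA hy)
    simp [hx, this]

section InnerProductSpace

variable {E F : Type*} [NormedAddCommGroup E] [InnerProductSpace ℝ E] [FiniteDimensional ℝ E]
  [MeasurableSpace E] [BorelSpace E] [NormedAddCommGroup F] [InnerProductSpace ℝ F]
  [FiniteDimensional ℝ F] [MeasurableSpace F] [BorelSpace F]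

theorem IsometryEquiv.measurePreserving_volume (f : E ≃ᵢ F) :
    MeasurePreserving f (volume : Measure E) volume := by
  have hf : ⇑f = (· + f 0) ∘ f.toRealLinearIsometryEquiv := by
    ext x
    simp [IsometryEquiv.toRealLinearIsometryEquiv_apply]
  rw [hf]
  exact (measurePreserving_add_right volume (f 0)).comp
    f.toRealLinearIsometryEquiv.measurePreserving

theorem IsometryEquiv.volume_preimage (f : E ≃ᵢ F) (s : Set F) :
    volume (f ⁻¹' s) = volume s :=
  f.measurePreserving_volume.measure_preimage_equiv (f := f.toHomeomorph.toMeasurableEquiv) s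

theorem volume_ball_sqrt_of_finrank_eq_two (hE : finrank ℝ E = 2) (x : E) (a : ℝ) :
    volume (ball x √a) = ENNReal.ofReal (Real.pi * a) := by
  have : Nontrivial E := Module.nontrivial_of_finrank_eq_succ hE
  rw [InnerProductSpace.volume_ball_of_dim_even (k := 1) hE, hE]
  rcases le_total a 0 with ha | ha
  · simp [Real.sqrt_eq_zero'.mpr ha,
      ENNReal.ofReal_of_nonpos (mul_nonpos_of_nonneg_of_nonpos Real.pi_nonneg ha)]
  · rw [← ENNReal.ofReal_pow (Real.sqrt_nonneg a), Real.sq_sqrt ha, ← ENNReal.ofReal_mul ha]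
    simp [mul_comm]

theorem volume_sq_dist_mem_Icc_le (hE : finrank ℝ E = 2) (x : E) (a b : ℝ) :
    volume {y | dist y x ^ 2 ∈ Icc a b} ≤ ENNReal.ofReal (Real.pi * (b - a)) := by
  have : Nontrivial E := Module.nontrivial_of_finrank_eq_succ hE
  rcases lt_or_ge b a with hba | hab
  · simp [Icc_eq_empty_of_lt hba]
  have hsub : {y | dist y x ^ 2 ∈ Icc a b} ⊆ closedBall x √b \ ball x √a := by
    rintro y ⟨hay, hyb⟩
    simp only [Set.mem_sdiff, mem_closedBall, mem_ball, not_lt]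
    exact ⟨Real.le_sqrt_of_sq_le hyb, Real.sqrt_le_iff.mpr ⟨dist_nonneg, hay⟩⟩
  calc volume {y | dist y x ^ 2 ∈ Icc a b}
      ≤ volume (closedBall x √b) - volume (ball x √a) := by
        refine (measure_mono hsub).trans_eq (measure_sdiff ?_
          measurableSet_ball.nullMeasurableSet measure_ball_lt_top.ne)
        exact ball_subset_closedBall.trans (closedBall_subset_closedBall (Real.sqrt_le_sqrt hab))
    _ = ENNReal.ofReal (Real.pi * b) - ENNReal.ofReal (Real.pi * a) := by
        rw [Measure.addHaar_closedBall_eq_addHaar_ball, volume_ball_sqrt_of_finrank_eq_two hE,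
          volume_ball_sqrt_of_finrank_eq_two hE]
    _ ≤ ENNReal.ofReal (Real.pi * (b - a)) := by
        rw [tsub_le_iff_right]
        simpa [mul_sub] using ENNReal.ofReal_add_le (p := Real.pi * (b - a)) (q := Real.pi * a)

variable {U V : Type*} [NormedAddCommGroup U] [InnerProductSpace ℝ U] [FiniteDimensional ℝ U]
  [MeasurableSpace U] [BorelSpace U] [NormedAddCommGroup V] [InnerProductSpace ℝ V]
  [FiniteDimensional ℝ V] [MeasurableSpace V] [BorelSpace V]

theorem volume_fst_mem_sq_dist_mem_Icc_le (hV : finrank ℝ V = 2) {A : Set U}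
    (hA : MeasurableSet A) (c : WithLp 2 (U × V)) (a b : ℝ) :
    volume {p : WithLp 2 (U × V) | p.fst ∈ A ∧ dist p c ^ 2 ∈ Icc a b} ≤
      volume A * ENNReal.ofReal (Real.pi * (b - a)) := by
  set s := {p : WithLp 2 (U × V) | p.fst ∈ A ∧ dist p c ^ 2 ∈ Icc a b}
  have hs : MeasurableSet s :=
    (hA.preimage (by fun_prop)).inter (measurableSet_Icc.preimage (by fun_prop))
  have htoLp := WithLp.volume_preserving_toLp U V
  rw [← htoLp.measure_preimage hs.nullMeasurableSet, Measure.volume_eq_prod, mul_comm]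
  refine Measure.prod_le_mul_of_fiber_le (htoLp.measurable hs) (fun p hp => hp.1) fun u _ => ?_
  have hfiber :=
    volume_sq_dist_mem_Icc_le hV c.snd (a - dist u c.fst ^ 2) (b - dist u c.fst ^ 2)
  rw [sub_sub_sub_cancel_right] at hfiber
  refine (measure_mono fun v hv => ?_).trans hfiber
  have hdist : dist (WithLp.toLp 2 (u, v)) c ^ 2 = dist u c.fst ^ 2 + dist v c.snd ^ 2 := by
    rw [WithLp.prod_dist_eq_of_L2, Real.sq_sqrt (by positivity)]
    rfl
  obtain ⟨-, hv⟩ := hv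
  simp only [mem_ofPred_eq, hdist, mem_Icc] at hv ⊢
  constructor <;> linarith [hv.1, hv.2]

theorem volume_closedBall_diff_ball_le_of_subset_iUnion {ι : Type*} [Fintype ι]
    (hV : finrank ℝ V = 2) {X : ι → Set U} (hX : ∀ i, MeasurableSet (X i))
    (f : ι → E ≃ᵢ WithLp 2 (U × V)) (c : E) {r R : ℝ} (hr : 0 ≤ r)
    (hcover : closedBall c R ⊆ ⋃ i, f i ⁻¹' {p | p.fst ∈ X i}) :
    volume (closedBall c R \ ball c r) ≤
      (∑ i, volume (X i)) * ENNReal.ofReal (Real.pi * (R ^ 2 - r ^ 2)) := by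
  have hshell : closedBall c R \ ball c r ⊆
      ⋃ i, f i ⁻¹' {p | p.fst ∈ X i ∧ dist p (f i c) ^ 2 ∈ Icc (r ^ 2) (R ^ 2)} := by
    rintro x ⟨hxR, hxr⟩
    obtain ⟨i, hi⟩ := mem_iUnion.mp (hcover hxR)
    rw [mem_closedBall] at hxR
    rw [mem_ball, not_lt] at hxr
    refine mem_iUnion.mpr ⟨i, hi, ?_⟩
    rw [mem_Icc, (f i).dist_eq]
    exact ⟨pow_le_pow_left₀ hr hxr 2, pow_le_pow_left₀ dist_nonneg hxR 2⟩
  calc volume (closedBall c R \ ball c r)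
      ≤ ∑ i, volume (f i ⁻¹' {p | p.fst ∈ X i ∧ dist p (f i c) ^ 2 ∈ Icc (r ^ 2) (R ^ 2)}) :=
        (measure_mono hshell).trans (measure_iUnion_fintype_le _ _)
    _ ≤ ∑ i, volume (X i) * ENNReal.ofReal (Real.pi * (R ^ 2 - r ^ 2)) := by
        gcongr with i
        rw [(f i).volume_preimage]
        exact volume_fst_mem_sq_dist_mem_Icc_le hV (hX i) _ _ _
    _ = _ := (Finset.sum_mul _ _ _).symm

end InnerProductSpace

namespace EuclideanSpace

noncomputable def finAddEquivProdL2 {m k n : ℕ} (h : m + k = n) :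
    EuclideanSpace ℝ (Fin n) ≃ₗᵢ[ℝ]
      WithLp 2 (EuclideanSpace ℝ (Fin m) × EuclideanSpace ℝ (Fin k)) :=
  (LinearIsometryEquiv.piLpCongrLeft 2 ℝ ℝ ((finCongr h).symm.trans finSumFinEquiv.symm)).trans
    (PiLp.sumPiLpEquivProdLpPiLp 2 _)

theorem finAddEquivProdL2_fst {m k n : ℕ} (h : m + k = n) (x : EuclideanSpace ℝ (Fin n)) :
    (finAddEquivProdL2 h x).fst = WithLp.toLp 2 fun j => x (Fin.castLE (by omega) j) :=
  rfl

theorem volume_closedBall_diff_ball {ι : Type*} [Fintype ι] [Nonempty ι]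
    (x : EuclideanSpace ℝ ι) {r R : ℝ} (hr : 0 ≤ r) (hrR : r ≤ R) :
    volume (closedBall x R \ ball x r) = ENNReal.ofReal ((R ^ Fintype.card ι - r ^ Fintype.card ι)
      * (√Real.pi ^ Fintype.card ι / Real.Gamma (Fintype.card ι / 2 + 1))) := by
  rw [measure_sdiff (ball_subset_closedBall.trans (closedBall_subset_closedBall hrR))
      measurableSet_ball.nullMeasurableSet measure_ball_lt_top.ne,
    volume_closedBall, volume_ball, ← ENNReal.sub_mul fun _ _ => ENNReal.ofReal_ne_top,
    ← ENNReal.ofReal_pow hr, ← ENNReal.ofReal_pow (hr.trans hrR),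
    ← ENNReal.ofReal_sub _ (by positivity),
    ← ENNReal.ofReal_mul (sub_nonneg.2 (pow_le_pow_left₀ hr hrR _))]

end EuclideanSpace

/-- If the closed Euclidean unit ball in `ℝⁿ` (`n ≥ 3`) is covered by
`2`-dimensional Euclidean cylinders `Z i`, each an isometric image of `X i × ℝ²` with `X i` a
convex body in `ℝ^{n−2}`, then `Σ vol_{n−2}(X i) ≥ vol_{n−2}(B^{n−2}) = π^{n/2−1}/Γ(n/2)`. -/
theorem covering_ball_by_two_dim_cylinders
    (n : ℕ) (hn : 3 ≤ n) (N : ℕ)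
    (X : Fin N → Set (EuclideanSpace ℝ (Fin (n - 2))))
    (hX : ∀ i, IsCompact (X i) ∧ Convex ℝ (X i) ∧ (interior (X i)).Nonempty)
    (T : Fin N → (EuclideanSpace ℝ (Fin n) ≃ᵢ EuclideanSpace ℝ (Fin n)))
    (Z : Fin N → Set (EuclideanSpace ℝ (Fin n)))
    (hZ : ∀ i, Z i = T i ''
      {x | WithLp.toLp 2 (fun jj : Fin (n - 2) => x (Fin.castLE (Nat.sub_le n 2) jj)) ∈ X i})
    (hcover : Metric.closedBall (0 : EuclideanSpace ℝ (Fin n)) 1 ⊆ ⋃ i, Z i) :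
    ENNReal.ofReal (Real.pi ^ ((n : ℝ) / 2 - 1) / Real.Gamma ((n : ℝ) / 2)) ≤
      ∑ i, volume (X i) := by
  have hn2 : n - 2 + 2 = n := by omega
  let f (i : Fin N) := (T i).symm.trans (EuclideanSpace.finAddEquivProdL2 hn2).toIsometryEquiv
  have hZf : ∀ i, Z i = f i ⁻¹' {p | p.fst ∈ X i} := by
    intro i
    rw [hZ i, ← (T i).preimage_symm]
    ext x
    simp [f, EuclideanSpace.finAddEquivProdL2_fst]
  have hS : ∑ i, volume (X i) ≠ ∞ := ENNReal.sum_ne_top.2 fun i _ => (hX i).1.measure_lt_top.ne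
  have : Nonempty (Fin n) := ⟨⟨0, by omega⟩⟩
  have hshell : ∀ r ∈ Ioo (0 : ℝ) 1, √Real.pi ^ n / Real.Gamma (n / 2 + 1) * (1 - r ^ n) ≤
      Real.pi * (∑ i, volume (X i)).toReal * (1 - r ^ 2) := by
    intro r hr
    have h := volume_closedBall_diff_ball_le_of_subset_iUnion finrank_euclideanSpace_fin
      (fun i => (hX i).1.measurableSet) f 0 hr.1.le (hcover.trans_eq (by simp only [hZf]))
    rw [EuclideanSpace.volume_closedBall_diff_ball 0 hr.1.le hr.2.le, ← ENNReal.ofReal_toReal hS,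
      ← ENNReal.ofReal_mul ENNReal.toReal_nonneg, ENNReal.ofReal_le_ofReal_iff
        (by have := pow_le_pow_left₀ hr.1.le hr.2.le 2; positivity)] at h
    simp only [Fintype.card_fin, one_pow] at h
    linarith
  rw [← ENNReal.ofReal_toReal hS]
  refine ENNReal.ofReal_le_ofReal (le_of_mul_le_mul_left ?_ (by positivity : 0 < 2 * Real.pi))
  rw [← nat_mul_sqrt_pi_pow_div_Gamma (by omega)]
  linarith [nat_mul_le_two_mul_of_one_sub_pow_le hshell]
end

section
/- Let n > m ≥ 2, let Z_1, …, Z_N be m-dimensional Euclidean cylinders in ℝ^n, where each Z_i is the image under a Euclidean isometry of ℝ^n of X_i × ℝ^m (identifying ℝ^n with ℝ^{n−m} × ℝ^m) with X_i a convex body in ℝ^{n−m}, and let t_1, …, t_N ≥ 0 be weights such that for every point x of the closed Euclidean unit ball B^n one has Σ_{i : x ∈ Z_i} t_i ≥ 1. Then Σ_{i=1}^{N} t_i · vol_{n−m}(X_i) ≥ π^{(n−m)/2} Γ(m/2) / Γ(n/2). -/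
open MeasureTheory
open scoped Classical

open scoped ENNReal Topology

/-!
Write `J_b(β) = ∫_{ℝ^b} (1 - ‖z‖²)₊^β` (`ballWeightIntegral b β`) and integrate the weight
`(1 - ‖x‖²)₊^α` over `ℝⁿ`.
Splitting `ℝⁿ = ℝ^{n-m} × ℝ^m` and rescaling the fibres gives `J_n(α) = J_{n-m}(α + m/2) J_m(α)`.
A cylinder `T(X × ℝ^m)` is fibred by affine `m`-planes, and on a plane at distance `d` from the
origin the weight integrates to `(1 - d²)₊^{α + m/2} J_m(α) ≤ J_m(α)` as long as `α + m/2 ≥ 0`;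
so the weight has mass at most `vol(X) J_m(α)` on the cylinder. The fractional covering therefore
gives `J_{n-m}(α + m/2) ≤ Σ tᵢ vol(Xᵢ)` for every `α > -1` (where `J_m(α)` is finite and can be
cancelled). Letting `α ↓ -1` by monotone convergence, and evaluating
`J_{n-m}(m/2 - 1) = J_{n-2}(0) / J_{m-2}(0) = vol(B^{n-2}) / vol(B^{m-2})` with the same
factorisation, yields the constant `π^{(n-m)/2} Γ(m/2) / Γ(n/2)`.
-/

noncomputable def ballWeight (β s : ℝ) : ℝ≥0∞ := if s < 1 then ENNReal.ofReal ((1 - s) ^ β) else 0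

section ballWeight

variable {β β' s : ℝ}

@[fun_prop]
lemma measurable_ballWeight (β : ℝ) : Measurable (ballWeight β) :=
  Measurable.ite measurableSet_Iio (by fun_prop) measurable_const

lemma ballWeight_of_lt_one (hs : s < 1) : ballWeight β s = ENNReal.ofReal ((1 - s) ^ β) :=
  if_pos hs

lemma ballWeight_of_one_le (hs : 1 ≤ s) : ballWeight β s = 0 := if_neg hs.not_gt

lemma ballWeight_pos (hs : s < 1) : 0 < ballWeight β s := by
  rw [ballWeight_of_lt_one hs, ENNReal.ofReal_pos]
  exact Real.rpow_pos_of_pos (by linarith) β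

lemma ballWeight_le_one (hβ : 0 ≤ β) (hs : 0 ≤ s) : ballWeight β s ≤ 1 := by
  rcases lt_or_ge s 1 with hs1 | hs1
  · rw [ballWeight_of_lt_one hs1]
    exact ENNReal.ofReal_le_one.mpr (Real.rpow_le_one (by linarith) (by linarith) hβ)
  · simp [ballWeight_of_one_le hs1]

lemma ballWeight_anti (hβ : β' ≤ β) (hs : 0 ≤ s) : ballWeight β s ≤ ballWeight β' s := by
  rcases lt_or_ge s 1 with hs1 | hs1
  · rw [ballWeight_of_lt_one hs1, ballWeight_of_lt_one hs1]
    exact ENNReal.ofReal_le_ofReal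
      (Real.rpow_le_rpow_of_exponent_ge (by linarith) (by linarith) hβ)
  · simp [ballWeight_of_one_le hs1]

lemma continuous_ballWeight_exponent (s : ℝ) : Continuous fun β => ballWeight β s := by
  rcases lt_or_ge s 1 with hs | hs
  · simp only [ballWeight_of_lt_one hs]
    exact ENNReal.continuous_ofReal.comp (Real.continuous_const_rpow (by linarith))
  · simp only [ballWeight_of_one_le hs]
    exact continuous_const

lemma ballWeight_one_sub_add_mul {a : ℝ} (ha : 0 < a) (β s : ℝ) :
    ballWeight β (1 - a + a * s) = ENNReal.ofReal (a ^ β) * ballWeight β s := by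
  rcases lt_or_ge s 1 with hs | hs
  · rw [ballWeight_of_lt_one hs, ballWeight_of_lt_one (by nlinarith),
      ← ENNReal.ofReal_mul (by positivity), ← Real.mul_rpow ha.le (by linarith)]
    ring_nf
  · rw [ballWeight_of_one_le hs, ballWeight_of_one_le (by nlinarith), mul_zero]

end ballWeight

lemma MeasureTheory.Measure.lintegral_comp_smul {E : Type*} [NormedAddCommGroup E]
    [NormedSpace ℝ E] [MeasurableSpace E] [BorelSpace E] [FiniteDimensional ℝ E]
    (μ : Measure E) [μ.IsAddHaarMeasure] {f : E → ℝ≥0∞} (hf : Measurable f) {r : ℝ}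
    (hr : r ≠ 0) :
    ∫⁻ x, f (r • x) ∂μ = ENNReal.ofReal |(r ^ Module.finrank ℝ E)⁻¹| * ∫⁻ x, f x ∂μ := by
  rw [← lintegral_map hf (measurable_const_smul r), Measure.map_addHaar_smul μ hr,
    lintegral_smul_measure, smul_eq_mul]

section finAddEquivWithLpProd

variable {k m n : ℕ}

noncomputable def finAddEquivWithLpProd (h : k + m = n) :
    EuclideanSpace ℝ (Fin n) ≃ₗᵢ[ℝ]
      WithLp 2 (EuclideanSpace ℝ (Fin k) × EuclideanSpace ℝ (Fin m)) :=
  (LinearIsometryEquiv.piLpCongrLeft 2 ℝ ℝ (finSumFinEquiv.trans (finCongr h)).symm).trans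
    (PiLp.sumPiLpEquivProdLpPiLp 2 fun _ => ℝ)

lemma measurePreserving_finAddEquivWithLpProd_symm_toLp (h : k + m = n) :
    MeasurePreserving fun p : EuclideanSpace ℝ (Fin k) × EuclideanSpace ℝ (Fin m) =>
      (finAddEquivWithLpProd h).symm (WithLp.toLp 2 p) :=
  (finAddEquivWithLpProd h).symm.measurePreserving.comp
    (WithLp.volume_preserving_symm_measurableEquiv_toLp_prod _ _).symm

lemma norm_finAddEquivWithLpProd_symm_toLp_sq (h : k + m = n) (y : EuclideanSpace ℝ (Fin k))
    (z : EuclideanSpace ℝ (Fin m)) :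
    ‖(finAddEquivWithLpProd h).symm (WithLp.toLp 2 (y, z))‖ ^ 2 = ‖y‖ ^ 2 + ‖z‖ ^ 2 := by
  rw [LinearIsometryEquiv.norm_map, WithLp.prod_norm_sq_eq_of_L2]
  rfl

lemma finAddEquivWithLpProd_symm_toLp_castLE (h : k + m = n) (y : EuclideanSpace ℝ (Fin k))
    (z : EuclideanSpace ℝ (Fin m)) (j : Fin k) :
    (finAddEquivWithLpProd h).symm (WithLp.toLp 2 (y, z)) (Fin.castLE (Nat.le.intro h) j) =
      y j := by
  have hj : Fin.castLE (Nat.le_add_right k m) j = Fin.castAdd m j := rfl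
  subst h
  simp [finAddEquivWithLpProd, hj]

lemma lintegral_eq_lintegral_lintegral_finAddEquivWithLpProd (h : k + m = n)
    {f : EuclideanSpace ℝ (Fin n) → ℝ≥0∞} (hf : Measurable f) :
    ∫⁻ x, f x = ∫⁻ y, ∫⁻ z, f ((finAddEquivWithLpProd h).symm (WithLp.toLp 2 (y, z))) := by
  have hmp := measurePreserving_finAddEquivWithLpProd_symm_toLp h
  rw [← hmp.lintegral_comp hf, Measure.volume_eq_prod]
  exact lintegral_prod _ (hf.comp hmp.measurable).aemeasurable

end finAddEquivWithLpProd

noncomputable def ballWeightIntegral (b : ℕ) (β : ℝ) : ℝ≥0∞ :=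
  ∫⁻ z : EuclideanSpace ℝ (Fin b), ballWeight β (‖z‖ ^ 2)

section ballWeightIntegral

variable {k m n : ℕ} {β : ℝ}

lemma measurable_ballWeight_norm_sq {E : Type*} [NormedAddCommGroup E] [MeasurableSpace E]
    [OpensMeasurableSpace E] (β : ℝ) : Measurable fun x : E => ballWeight β (‖x‖ ^ 2) := by
  fun_prop

lemma lintegral_ballWeight_add_norm_sq (b : ℕ) (β d : ℝ) :
    ∫⁻ z : EuclideanSpace ℝ (Fin b), ballWeight β (d + ‖z‖ ^ 2)
      = ballWeight (β + b / 2) d * ballWeightIntegral b β := by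
  rcases le_or_gt 1 d with hd | hd
  · simp [ballWeight_of_one_le hd,
      ballWeight_of_one_le (le_add_of_le_of_nonneg hd (sq_nonneg _))]
  obtain ⟨a, ha, rfl⟩ : ∃ a, 0 < a ∧ d = 1 - a := ⟨1 - d, by linarith, by ring⟩
  have hr : 0 < Real.sqrt a := Real.sqrt_pos.mpr ha
  have hrescaled (u : EuclideanSpace ℝ (Fin b)) :
      ballWeight β (1 - a + ‖Real.sqrt a • u‖ ^ 2)
        = ENNReal.ofReal (a ^ β) * ballWeight β (‖u‖ ^ 2) := by
    rw [norm_smul, mul_pow, Real.norm_eq_abs, sq_abs, Real.sq_sqrt ha.le,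
      ballWeight_one_sub_add_mul ha]
  have hscale := Measure.lintegral_comp_smul volume (by fun_prop) hr.ne'
    (f := fun z : EuclideanSpace ℝ (Fin b) => ballWeight β (1 - a + ‖z‖ ^ 2))
  simp only [hrescaled, lintegral_const_mul _ (by fun_prop : Measurable fun z :
    EuclideanSpace ℝ (Fin b) => ballWeight β (‖z‖ ^ 2)), finrank_euclideanSpace_fin,
    abs_of_pos (inv_pos.mpr (pow_pos hr b))] at hscale
  have hpow : Real.sqrt a ^ b * a ^ β = a ^ (β + b / 2) := by
    rw [Real.sqrt_eq_rpow, ← Real.rpow_natCast, ← Real.rpow_mul ha.le, ← Real.rpow_add ha]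
    ring_nf
  rw [ballWeight_of_lt_one (by linarith), sub_sub_cancel, ← hpow,
    ENNReal.ofReal_mul (by positivity), mul_assoc, ballWeightIntegral, hscale, ← mul_assoc,
    ← ENNReal.ofReal_mul (by positivity), mul_inv_cancel₀ (pow_pos hr b).ne',
    ENNReal.ofReal_one, one_mul]

lemma ballWeightIntegral_add (h : k + m = n) (β : ℝ) :
    ballWeightIntegral n β = ballWeightIntegral k (β + m / 2) * ballWeightIntegral m β := by
  simp only [ballWeightIntegral,
    lintegral_eq_lintegral_lintegral_finAddEquivWithLpProd h (measurable_ballWeight_norm_sq β),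
    norm_finAddEquivWithLpProd_symm_toLp_sq, lintegral_ballWeight_add_norm_sq]
  exact lintegral_mul_const _ (measurable_ballWeight_norm_sq _)

lemma ballWeightIntegral_dim_zero (β : ℝ) : ballWeightIntegral 0 β = 1 := by
  have hv : volume (Set.univ : Set (EuclideanSpace ℝ (Fin 0))) = 1 := by
    have := (PiLp.volume_preserving_toLp (Fin 0)).measure_preimage
      (s := Set.univ) MeasurableSet.univ.nullMeasurableSet
    simp_all [volume_pi]
  simp [ballWeightIntegral, Subsingleton.elim _ (0 : EuclideanSpace ℝ (Fin 0)),
    ballWeight_of_lt_one, hv]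

lemma ballWeightIntegral_pos (b : ℕ) (β : ℝ) : 0 < ballWeightIntegral b β := by
  rw [ballWeightIntegral, lintegral_pos_iff_support (by fun_prop)]
  refine (Metric.measure_ball_pos volume 0 one_pos).trans_le (measure_mono fun z hz => ?_)
  rw [mem_ball_zero_iff] at hz
  exact (ballWeight_pos (by nlinarith [norm_nonneg z])).ne'

lemma ballWeightIntegral_one (β : ℝ) :
    ballWeightIntegral 1 β = ∫⁻ s : ℝ, ballWeight β (s ^ 2) := by
  have hmp : MeasurePreserving (fun x : EuclideanSpace ℝ (Fin 1) => x 0) :=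
    (volume_preserving_funUnique (Fin 1) ℝ).comp
      (EuclideanSpace.volume_preserving_symm_measurableEquiv_toLp (Fin 1))
  rw [← hmp.lintegral_comp (by fun_prop), ballWeightIntegral]
  simp [EuclideanSpace.norm_eq, Real.sq_sqrt (sq_nonneg _)]

lemma intervalIntegrable_one_sub_rpow_add_one_add_rpow (hβ : -1 < β) :
    IntervalIntegrable (fun s : ℝ => (1 - s) ^ β + (1 + s) ^ β) volume (-1) 1 := by
  have hrpow := intervalIntegral.intervalIntegrable_rpow' hβ (a := 0) (b := 2)
  have hsub := (hrpow.comp_sub_left 1).symm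
  have hadd := hrpow.comp_add_left 1
  norm_num at hsub hadd
  exact hsub.add hadd

lemma ballWeight_sq_le_indicator (hβ : β ≤ 0) (s : ℝ) :
    ballWeight β (s ^ 2) ≤
      (Set.Ioc (-1) 1).indicator (fun s => ENNReal.ofReal ((1 - s) ^ β + (1 + s) ^ β)) s := by
  rcases le_or_gt 1 (s ^ 2) with hs | hs
  · simp [ballWeight_of_one_le hs]
  have hs' : -1 < s ∧ s < 1 := abs_lt.mp (sq_lt_one_iff_abs_lt_one s |>.mp hs)
  rw [ballWeight_of_lt_one hs,
    Set.indicator_of_mem (show s ∈ Set.Ioc (-1) 1 from ⟨hs'.1, hs'.2.le⟩)]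
  refine ENNReal.ofReal_le_ofReal ?_
  have h₁ := Real.rpow_nonneg (by linarith : (0 : ℝ) ≤ 1 - s) β
  have h₂ := Real.rpow_nonneg (by linarith : (0 : ℝ) ≤ 1 + s) β
  -- `1 - s²` dominates whichever of `1 - s`, `1 + s` is at most `1`, and `β ≤ 0`.
  rcases le_total 0 s with h0 | h0
  · have := Real.rpow_le_rpow_of_nonpos (x := 1 - s) (y := 1 - s ^ 2)
      (by linarith) (by nlinarith) hβ
    linarith
  · have := Real.rpow_le_rpow_of_nonpos (x := 1 + s) (y := 1 - s ^ 2)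
      (by linarith) (by nlinarith) hβ
    linarith

lemma ballWeightIntegral_one_lt_top (hβ : -1 < β) : ballWeightIntegral 1 β < ⊤ := by
  set γ := min β 0
  have hγ : -1 < γ := lt_min hβ (by norm_num)
  calc ballWeightIntegral 1 β
      ≤ ballWeightIntegral 1 γ :=
        lintegral_mono fun z => ballWeight_anti (min_le_left _ _) (sq_nonneg _)
    _ ≤ ∫⁻ s in Set.Ioc (-1) 1, ENNReal.ofReal ((1 - s) ^ γ + (1 + s) ^ γ) := by
        rw [ballWeightIntegral_one, ← lintegral_indicator measurableSet_Ioc]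
        exact lintegral_mono (ballWeight_sq_le_indicator (min_le_right _ _))
    _ < ⊤ := (intervalIntegrable_one_sub_rpow_add_one_add_rpow hγ).1.lintegral_lt_top

lemma ballWeightIntegral_lt_top (b : ℕ) (hβ : -1 < β) : ballWeightIntegral b β < ⊤ := by
  induction b generalizing β with
  | zero => simp [ballWeightIntegral_dim_zero]
  | succ b ih =>
    rw [ballWeightIntegral_add rfl]
    exact ENNReal.mul_lt_top (ih (by push_cast; linarith)) (ballWeightIntegral_one_lt_top hβ)

lemma ballWeightIntegral_exponent_zero (b : ℕ) :
    ballWeightIntegral b 0 = ENNReal.ofReal (Real.sqrt Real.pi ^ b / Real.Gamma (b / 2 + 1)) := by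
  cases b with
  | zero => simp [ballWeightIntegral_dim_zero]
  | succ b =>
    have hw (z : EuclideanSpace ℝ (Fin (b + 1))) :
        ballWeight 0 (‖z‖ ^ 2) = (Metric.ball 0 1).indicator 1 z := by
      rcases lt_or_ge ‖z‖ 1 with hz | hz
      · simp [ballWeight_of_lt_one (by nlinarith [norm_nonneg z] : ‖z‖ ^ 2 < 1), hz]
      · simp [ballWeight_of_one_le (by nlinarith : 1 ≤ ‖z‖ ^ 2), hz.not_gt]
    simp only [ballWeightIntegral, hw, lintegral_indicator_one measurableSet_ball,
      EuclideanSpace.volume_ball, Fintype.card_fin]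
    simp

lemma ballWeightIntegral_half_sub_one (k : ℕ) {m : ℕ} (hm : 2 ≤ m) :
    ballWeightIntegral k (m / 2 - 1) = ENNReal.ofReal
      (Real.pi ^ ((k : ℝ) / 2) * Real.Gamma (m / 2) / Real.Gamma ((k + m) / 2)) := by
  obtain ⟨j, rfl⟩ := Nat.exists_eq_add_of_le' hm
  have hsplit := ballWeightIntegral_add (rfl : k + j = k + j) 0
  rw [zero_add, ballWeightIntegral_exponent_zero, ballWeightIntegral_exponent_zero] at hsplit
  have hΓ (x : ℕ) : 0 < Real.Gamma (x / 2 + 1) := Real.Gamma_pos_of_pos (by positivity)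
  have hπ : Real.sqrt Real.pi ^ k = Real.pi ^ ((k : ℝ) / 2) := by
    rw [Real.sqrt_eq_rpow, ← Real.rpow_natCast, ← Real.rpow_mul Real.pi_pos.le]
    ring_nf
  have hvj : 0 < Real.sqrt Real.pi ^ j / Real.Gamma (j / 2 + 1) :=
    div_pos (pow_pos (Real.sqrt_pos.mpr Real.pi_pos) j) (hΓ j)
  have hvalue : Real.pi ^ ((k : ℝ) / 2) * Real.Gamma ((j + 2 : ℕ) / 2)
        / Real.Gamma ((k + (j + 2 : ℕ)) / 2) * (Real.sqrt Real.pi ^ j / Real.Gamma (j / 2 + 1))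
      = Real.sqrt Real.pi ^ (k + j) / Real.Gamma ((k + j : ℕ) / 2 + 1) := by
    rw [← hπ, pow_add]
    push_cast
    rw [show ((j : ℝ) + 2) / 2 = j / 2 + 1 by ring,
      show ((k : ℝ) + (j + 2)) / 2 = (k + j) / 2 + 1 by ring]
    field_simp [(hΓ j).ne', (hΓ (k + j)).ne']
  rw [show ((j + 2 : ℕ) : ℝ) / 2 - 1 = j / 2 by push_cast; ring,
    ← ENNReal.mul_left_inj (ENNReal.ofReal_pos.mpr hvj).ne' ENNReal.ofReal_ne_top, ← hsplit,
    ← ENNReal.ofReal_mul (by positivity), hvalue]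

lemma ballWeightIntegral_le_of_forall_lt {b : ℕ} {R : ℝ≥0∞}
    (h : ∀ β', β < β' → ballWeightIntegral b β' ≤ R) : ballWeightIntegral b β ≤ R := by
  set βs : ℕ → ℝ := fun j => β + 1 / ((j : ℝ) + 1)
  have hβs : Filter.Tendsto βs Filter.atTop (𝓝 β) := by
    simpa [βs] using tendsto_one_div_add_atTop_nhds_zero_nat.const_add β
  have hanti : Antitone βs := fun i j hij => by
    simp only [βs]
    gcongr
  refine le_of_tendsto' (lintegral_tendsto_of_tendsto_of_monotone
    (fun j => (measurable_ballWeight_norm_sq _).aemeasurable)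
    (Filter.Eventually.of_forall fun z i j hij => ballWeight_anti (hanti hij) (sq_nonneg _))
    (Filter.Eventually.of_forall fun z =>
      ((continuous_ballWeight_exponent _).tendsto β).comp hβs))
    fun j => h _ (lt_add_of_pos_right β (by positivity))

end ballWeightIntegral

lemma IsometryEquiv.exists_norm_apply_eq_norm_add {E F : Type*} [NormedAddCommGroup E]
    [NormedSpace ℝ E] [NormedAddCommGroup F] [NormedSpace ℝ F] (T : E ≃ᵢ F) :
    ∃ v : E, ∀ x, ‖T x‖ = ‖x + v‖ := by
  refine ⟨T.toRealLinearIsometryEquiv.symm (T 0), fun x => ?_⟩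
  rw [← T.toRealLinearIsometryEquiv.norm_map, map_add, LinearIsometryEquiv.apply_symm_apply,
    IsometryEquiv.toRealLinearIsometryEquiv_apply, sub_add_cancel]

lemma IsometryEquiv.measurePreserving_volume_s11 {E F : Type*} [NormedAddCommGroup E]
    [InnerProductSpace ℝ E] [FiniteDimensional ℝ E] [MeasurableSpace E] [BorelSpace E]
    [NormedAddCommGroup F] [InnerProductSpace ℝ F] [FiniteDimensional ℝ F] [MeasurableSpace F]
    [BorelSpace F] (T : E ≃ᵢ F) : MeasurePreserving T := by
  have hT : ⇑T = (· + T 0) ∘ T.toRealLinearIsometryEquiv := by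
    ext x
    simp
  rw [hT]
  exact (measurePreserving_add_right volume (T 0)).comp
    T.toRealLinearIsometryEquiv.measurePreserving

section euclideanCylinder

variable {k m n : ℕ}

def euclideanCylinder (hkn : k ≤ n) (S : Set (EuclideanSpace ℝ (Fin k))) :
    Set (EuclideanSpace ℝ (Fin n)) :=
  {x | WithLp.toLp 2 (fun j : Fin k => x (Fin.castLE hkn j)) ∈ S}

lemma measurableSet_euclideanCylinder (hkn : k ≤ n) {S : Set (EuclideanSpace ℝ (Fin k))}
    (hS : MeasurableSet S) : MeasurableSet (euclideanCylinder hkn S) :=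
  hS.preimage (by fun_prop)

lemma finAddEquivWithLpProd_symm_toLp_mem_euclideanCylinder (h : k + m = n)
    {S : Set (EuclideanSpace ℝ (Fin k))} (y : EuclideanSpace ℝ (Fin k))
    (z : EuclideanSpace ℝ (Fin m)) :
    (finAddEquivWithLpProd h).symm (WithLp.toLp 2 (y, z)) ∈ euclideanCylinder (Nat.le.intro h) S ↔
      y ∈ S := by
  simp [euclideanCylinder, finAddEquivWithLpProd_symm_toLp_castLE]

lemma lintegral_ballWeight_isometry_fiber_le (h : k + m = n) {α : ℝ} (hα : 0 ≤ α + m / 2)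
    (T : EuclideanSpace ℝ (Fin n) ≃ᵢ EuclideanSpace ℝ (Fin n)) (y : EuclideanSpace ℝ (Fin k)) :
    ∫⁻ z, ballWeight α (‖T ((finAddEquivWithLpProd h).symm (WithLp.toLp 2 (y, z)))‖ ^ 2)
      ≤ ballWeightIntegral m α := by
  obtain ⟨v, hv⟩ := T.exists_norm_apply_eq_norm_add
  obtain ⟨⟨p, q⟩, rfl⟩ : ∃ pq, (finAddEquivWithLpProd h).symm (WithLp.toLp 2 pq) = v :=
    ⟨(finAddEquivWithLpProd h v).ofLp, by simp⟩
  simp_rw [hv, ← map_add, ← WithLp.toLp_add, Prod.mk_add_mk,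
    norm_finAddEquivWithLpProd_symm_toLp_sq]
  rw [lintegral_add_right_eq_self (fun z => ballWeight α (‖y + p‖ ^ 2 + ‖z‖ ^ 2)) q,
    lintegral_ballWeight_add_norm_sq]
  exact mul_le_of_le_one_left' (ballWeight_le_one hα (sq_nonneg _))

lemma setLIntegral_ballWeight_image_euclideanCylinder_le (h : k + m = n) {α : ℝ}
    (hα : 0 ≤ α + m / 2) (T : EuclideanSpace ℝ (Fin n) ≃ᵢ EuclideanSpace ℝ (Fin n))
    {S : Set (EuclideanSpace ℝ (Fin k))} (hS : MeasurableSet S) :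
    ∫⁻ x in T '' euclideanCylinder (Nat.le.intro h) S, ballWeight α (‖x‖ ^ 2)
      ≤ volume S * ballWeightIntegral m α := by
  have hC := measurableSet_euclideanCylinder (Nat.le.intro h) hS
  have hg : Measurable fun x => ballWeight α (‖T x‖ ^ 2) :=
    (measurable_ballWeight_norm_sq α).comp T.continuous.measurable
  rw [← T.measurePreserving_volume_s11.setLIntegral_comp_emb
      T.toHomeomorph.toMeasurableEquiv.measurableEmbedding,
    ← lintegral_indicator hC,
    lintegral_eq_lintegral_lintegral_finAddEquivWithLpProd h (hg.indicator hC)]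
  calc ∫⁻ y, ∫⁻ z, (euclideanCylinder _ S).indicator (fun x => ballWeight α (‖T x‖ ^ 2))
          ((finAddEquivWithLpProd h).symm (WithLp.toLp 2 (y, z)))
      = ∫⁻ y, S.indicator (fun y => ∫⁻ z,
          ballWeight α (‖T ((finAddEquivWithLpProd h).symm (WithLp.toLp 2 (y, z)))‖ ^ 2)) y := by
        congr with y
        by_cases hy : y ∈ S <;>
          simp [Set.indicator, finAddEquivWithLpProd_symm_toLp_mem_euclideanCylinder, hy]
    _ ≤ ∫⁻ y, S.indicator (fun _ => ballWeightIntegral m α) y :=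
        lintegral_mono fun y => Set.indicator_le_indicator
          (lintegral_ballWeight_isometry_fiber_le h hα T y)
    _ = volume S * ballWeightIntegral m α := by
        rw [lintegral_indicator_const hS, mul_comm]

end euclideanCylinder

lemma lintegral_le_sum_mul_setLIntegral_of_cover {X ι : Type*} [MeasurableSpace X] [Fintype ι]
    {μ : Measure X} {f : X → ℝ≥0∞} (hf : Measurable f) {Z : ι → Set X}
    (hZ : ∀ i, MeasurableSet (Z i)) (t : ι → ℝ≥0∞)
    (hcover : ∀ x, f x ≠ 0 → 1 ≤ ∑ i, (Z i).indicator (fun _ => t i) x) :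
    ∫⁻ x, f x ∂μ ≤ ∑ i, t i * ∫⁻ x in Z i, f x ∂μ := by
  have hpoint (x : X) : f x ≤ ∑ i, (Z i).indicator (fun x => t i * f x) x := by
    by_cases hx : f x = 0
    · simp [hx]
    calc f x = 1 * f x := (one_mul _).symm
      _ ≤ (∑ i, (Z i).indicator (fun _ => t i) x) * f x := by gcongr; exact hcover x hx
      _ = ∑ i, (Z i).indicator (fun x => t i * f x) x := by
        simp only [Finset.sum_mul, Set.indicator_mul_left]
  calc ∫⁻ x, f x ∂μ ≤ ∫⁻ x, ∑ i, (Z i).indicator (fun x => t i * f x) x ∂μ :=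
        lintegral_mono hpoint
    _ = ∑ i, ∫⁻ x, (Z i).indicator (fun x => t i * f x) x ∂μ :=
        lintegral_finsetSum _ fun i _ => (hf.const_mul _).indicator (hZ i)
    _ = ∑ i, t i * ∫⁻ x in Z i, f x ∂μ := by
        simp only [lintegral_indicator (hZ _), lintegral_const_mul _ hf]

theorem ballWeightIntegral_le_sum_volume_of_cover {k m n : ℕ} {ι : Type*} [Fintype ι]
    (h : k + m = n) {α : ℝ} (hα : -1 < α) (hαm : 0 ≤ α + m / 2)
    {S : ι → Set (EuclideanSpace ℝ (Fin k))} (hS : ∀ i, MeasurableSet (S i))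
    (T : ι → EuclideanSpace ℝ (Fin n) ≃ᵢ EuclideanSpace ℝ (Fin n)) (t : ι → ℝ≥0∞)
    (hcover : ∀ x ∈ Metric.ball (0 : EuclideanSpace ℝ (Fin n)) 1,
      1 ≤ ∑ i, (T i '' euclideanCylinder (Nat.le.intro h) (S i)).indicator (fun _ => t i) x) :
    ballWeightIntegral k (α + m / 2) ≤ ∑ i, t i * volume (S i) := by
  rw [← ENNReal.mul_le_mul_iff_left (ballWeightIntegral_pos m α).ne'
    (ballWeightIntegral_lt_top m hα).ne, ← ballWeightIntegral_add h, Finset.sum_mul]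
  have hZ (i : ι) : MeasurableSet (T i '' euclideanCylinder (Nat.le.intro h) (S i)) :=
    (T i).toHomeomorph.toMeasurableEquiv.measurableSet_image.mpr
      (measurableSet_euclideanCylinder _ (hS i))
  have hball (x : EuclideanSpace ℝ (Fin n)) (hx : ballWeight α (‖x‖ ^ 2) ≠ 0) :
      x ∈ Metric.ball 0 1 := by
    rw [mem_ball_zero_iff]
    by_contra! hx1
    exact hx (ballWeight_of_one_le (by nlinarith))
  calc ballWeightIntegral n α
      ≤ ∑ i, t i * ∫⁻ x in T i '' euclideanCylinder (Nat.le.intro h) (S i),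
          ballWeight α (‖x‖ ^ 2) :=
        lintegral_le_sum_mul_setLIntegral_of_cover (by fun_prop) hZ t
          fun x hx => hcover x (hball x hx)
    _ ≤ ∑ i, t i * (volume (S i) * ballWeightIntegral m α) := by
        gcongr with i
        exact setLIntegral_ballWeight_image_euclideanCylinder_le h hαm (T i) (hS i)
    _ = ∑ i, t i * volume (S i) * ballWeightIntegral m α := by simp only [mul_assoc]

/-- Fractional covering of the closed Euclidean unit ball `B^n` by
`m`-dimensional Euclidean cylinders (`n > m ≥ 2`): if weights `t i ≥ 0` satisfy
`Σ_{i : x ∈ Z i} t i ≥ 1` for every `x ∈ B^n`, then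
`Σ t i · vol_{n−m}(X i) ≥ π^{(n−m)/2} Γ(m/2) / Γ(n/2)`. -/
theorem fractional_covering_ball_by_cylinders
    (n m : ℕ) (hm : 2 ≤ m) (hmn : m < n) (N : ℕ)
    (X : Fin N → Set (EuclideanSpace ℝ (Fin (n - m))))
    (hX : ∀ i, IsCompact (X i) ∧ Convex ℝ (X i) ∧ (interior (X i)).Nonempty)
    (T : Fin N → (EuclideanSpace ℝ (Fin n) ≃ᵢ EuclideanSpace ℝ (Fin n)))
    (Z : Fin N → Set (EuclideanSpace ℝ (Fin n)))
    (hZ : ∀ i, Z i = T i ''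
      {x | WithLp.toLp 2 (fun jj : Fin (n - m) => x (Fin.castLE (Nat.sub_le n m) jj)) ∈ X i})
    (t : Fin N → ℝ) (ht : ∀ i, 0 ≤ t i)
    (hcover : ∀ x ∈ Metric.closedBall (0 : EuclideanSpace ℝ (Fin n)) 1,
      1 ≤ ∑ i, if x ∈ Z i then t i else 0) :
    Real.pi ^ (((n : ℝ) - (m : ℝ)) / 2) * Real.Gamma ((m : ℝ) / 2) / Real.Gamma ((n : ℝ) / 2) ≤
      ∑ i, t i * (volume (X i)).toReal := by
  have hnm : n - m + m = n := Nat.sub_add_cancel hmn.le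
  obtain rfl : Z = fun i => T i '' euclideanCylinder (Nat.le.intro hnm) (X i) := funext hZ
  have hfin (i : Fin N) : ENNReal.ofReal (t i) * volume (X i) ≠ ⊤ :=
    ENNReal.mul_ne_top ENNReal.ofReal_ne_top (hX i).1.measure_lt_top.ne
  have hcover' (x : EuclideanSpace ℝ (Fin n)) (hx : x ∈ Metric.ball 0 1) :
      1 ≤ ∑ i, (T i '' euclideanCylinder (Nat.le.intro hnm) (X i)).indicator
        (fun _ => ENNReal.ofReal (t i)) x := by
    have := ENNReal.ofReal_le_ofReal (hcover x (Metric.ball_subset_closedBall hx))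
    rw [ENNReal.ofReal_one, ENNReal.ofReal_sum_of_nonneg fun i _ => by split_ifs <;> simp [ht]]
      at this
    simpa [Set.indicator_apply, apply_ite ENNReal.ofReal] using this
  have hbound :
      ballWeightIntegral (n - m) (m / 2 - 1) ≤ ∑ i, ENNReal.ofReal (t i) * volume (X i) := by
    refine ballWeightIntegral_le_of_forall_lt fun β hβ => ?_
    have hm2 : (2 : ℝ) ≤ m := by exact_mod_cast hm
    simpa using ballWeightIntegral_le_sum_volume_of_cover hnm (α := β - m / 2) (by linarith)
      (by linarith) (fun i => (hX i).1.measurableSet) T _ hcover'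
  rw [ballWeightIntegral_half_sub_one _ hm, ENNReal.ofReal_le_iff_le_toReal
    (ENNReal.sum_ne_top.mpr fun i _ => hfin i), ENNReal.toReal_sum fun i _ => hfin i,
    Nat.cast_sub hmn.le, sub_add_cancel] at hbound
  simpa only [ENNReal.toReal_mul, ENNReal.toReal_ofReal (ht _)] using hbound
end

section
/- Let τ, τ₀ ∈ [0, π] and ρ ∈ [0, 1] satisfy ρ cos τ = cos τ₀. Then ρ² (τ − sin τ cos τ) + π (1 − ρ²) ≥ τ₀ − sin τ₀ cos τ₀. -/
/-!
Write `A t = t - sin t cos t` and substitute `σ = π - τ`, `σ₀ = π - τ₀`. Since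
`A (π - t) = π - A t`, the inequality becomes `ρ² A σ ≤ A σ₀` under `ρ cos σ = cos σ₀`.
If `cos σ ≥ 0` then `σ ≤ σ₀`, and `A` is nonnegative and increasing (`A' = 2 sin²`).
If `cos σ < 0` then `π/2 < σ₀ ≤ σ`, `ρ² = cos² σ₀ / cos² σ`, and `A / cos²` is decreasing on
`(π/2, π]`, its derivative being `2 t sin t cos t / cos⁴ t`.
-/

open Real Set

/-- The area of the segment of the unit disc cut off by a chord of half-angle `t`, i.e. by a
line at distance `cos t` from the centre. -/
noncomputable def segmentArea (t : ℝ) : ℝ := t - sin t * cos t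

lemma hasDerivAt_segmentArea (t : ℝ) : HasDerivAt segmentArea (2 * sin t ^ 2) t := by
  refine ((hasDerivAt_id t).sub ((hasDerivAt_sin t).mul (hasDerivAt_cos t))).congr_deriv ?_
  nlinarith [sin_sq_add_cos_sq t]

lemma monotone_segmentArea : Monotone segmentArea :=
  monotone_of_deriv_nonneg (fun t => (hasDerivAt_segmentArea t).differentiableAt)
    fun t => (hasDerivAt_segmentArea t).deriv ▸ by positivity

lemma segmentArea_nonneg {t : ℝ} (ht : 0 ≤ t) : 0 ≤ segmentArea t := by
  simpa [segmentArea] using monotone_segmentArea ht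

lemma segmentArea_pi_sub (t : ℝ) : segmentArea (π - t) = π - segmentArea t := by
  simp only [segmentArea, sin_pi_sub, cos_pi_sub]
  ring

lemma hasDerivAt_segmentArea_div_cos_sq {t : ℝ} (ht : cos t ≠ 0) :
    HasDerivAt (fun s => segmentArea s / cos s ^ 2)
      (2 * t * sin t * cos t / (cos t ^ 2) ^ 2) t := by
  refine ((hasDerivAt_segmentArea t).div ((hasDerivAt_cos t).fun_pow 2)
    (pow_ne_zero 2 ht)).congr_deriv ?_
  simp only [segmentArea]
  field_simp
  ring

lemma antitoneOn_segmentArea_div_cos_sq :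
    AntitoneOn (fun t => segmentArea t / cos t ^ 2) (Ioc (π / 2) π) := by
  have hcos : ∀ t ∈ Ioc (π / 2) π, cos t < 0 := fun t ht =>
    cos_neg_of_pi_div_two_lt_of_lt ht.1 (by linarith [ht.2, pi_pos])
  have hd : ∀ t ∈ Ioc (π / 2) π, HasDerivAt (fun s => segmentArea s / cos s ^ 2)
      (2 * t * sin t * cos t / (cos t ^ 2) ^ 2) t :=
    fun t ht => hasDerivAt_segmentArea_div_cos_sq (hcos t ht).ne
  refine antitoneOn_of_deriv_nonpos (convex_Ioc _ _)
    (fun t ht => (hd t ht).continuousAt.continuousWithinAt)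
    (fun t ht => (hd t (interior_subset ht)).differentiableAt.differentiableWithinAt)
    fun t ht => ?_
  replace ht := interior_subset ht
  have ht₀ : 0 ≤ t := by linarith [ht.1, pi_pos]
  rw [(hd t ht).deriv]
  exact div_nonpos_of_nonpos_of_nonneg (mul_nonpos_of_nonneg_of_nonpos
    (mul_nonneg (by positivity) (sin_nonneg_of_nonneg_of_le_pi ht₀ ht.2)) (hcos t ht).le)
    (by positivity)

lemma mem_Ioc_of_cos_neg {t : ℝ} (ht : t ∈ Icc 0 π) (hc : cos t < 0) : t ∈ Ioc (π / 2) π :=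
  ⟨not_le.1 fun h => hc.not_ge (cos_nonneg_of_mem_Icc ⟨by linarith [ht.1, pi_pos], h⟩), ht.2⟩

lemma sq_mul_segmentArea_le {σ σ₀ ρ : ℝ} (hσ : σ ∈ Icc 0 π) (hσ₀ : σ₀ ∈ Icc 0 π)
    (hρ : ρ ∈ Icc (0 : ℝ) 1) (h : ρ * cos σ = cos σ₀) :
    ρ ^ 2 * segmentArea σ ≤ segmentArea σ₀ := by
  rcases le_or_gt 0 (cos σ) with hc | hc
  · have hσσ₀ : σ ≤ σ₀ := (strictAntiOn_cos.le_iff_ge hσ₀ hσ).1 (by nlinarith [hρ.2])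
    calc ρ ^ 2 * segmentArea σ ≤ segmentArea σ :=
          mul_le_of_le_one_left (segmentArea_nonneg hσ.1) (by nlinarith [hρ.1, hρ.2])
      _ ≤ segmentArea σ₀ := monotone_segmentArea hσσ₀
  rcases hρ.1.eq_or_lt with rfl | hρ0
  · simpa using segmentArea_nonneg hσ₀.1
  have hc₀ : cos σ₀ < 0 := h ▸ mul_neg_of_pos_of_neg hρ0 hc
  have hσ₀σ : σ₀ ≤ σ := (strictAntiOn_cos.le_iff_ge hσ hσ₀).1 (by nlinarith [hρ.2])
  calc ρ ^ 2 * segmentArea σ = segmentArea σ / cos σ ^ 2 * cos σ₀ ^ 2 := by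
        rw [← h]; field_simp [hc.ne]
    _ ≤ segmentArea σ₀ / cos σ₀ ^ 2 * cos σ₀ ^ 2 := mul_le_mul_of_nonneg_right
        (antitoneOn_segmentArea_div_cos_sq (mem_Ioc_of_cos_neg hσ₀ hc₀)
          (mem_Ioc_of_cos_neg hσ hc) hσ₀σ)
        (sq_nonneg _)
    _ = segmentArea σ₀ := div_mul_cancel₀ _ (pow_ne_zero 2 hc₀.ne)

/-- For `τ, τ₀ ∈ [0, π]`, `ρ ∈ [0, 1]` with `ρ cos τ = cos τ₀`, we have
`ρ² (τ − sin τ cos τ) + π (1 − ρ²) ≥ τ₀ − sin τ₀ cos τ₀`. -/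
theorem action_inequality (τ τ₀ ρ : ℝ) (hτ : τ ∈ Set.Icc 0 π) (hτ₀ : τ₀ ∈ Set.Icc 0 π)
    (hρ : ρ ∈ Set.Icc (0 : ℝ) 1) (h : ρ * cos τ = cos τ₀) :
    τ₀ - sin τ₀ * cos τ₀ ≤ ρ ^ 2 * (τ - sin τ * cos τ) + π * (1 - ρ ^ 2) := by
  have key := sq_mul_segmentArea_le (σ := π - τ) (σ₀ := π - τ₀)
    ⟨sub_nonneg.2 hτ.2, sub_le_self _ hτ.1⟩ ⟨sub_nonneg.2 hτ₀.2, sub_le_self _ hτ₀.1⟩ hρ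
    (by rw [cos_pi_sub, cos_pi_sub, mul_neg, h])
  rw [segmentArea_pi_sub, segmentArea_pi_sub] at key
  unfold segmentArea at key
  linarith
end

section
/- For all τ, τ₀ with 0 ≤ τ ≤ τ₀ ≤ π/2, the inequality cos²τ₀ · (τ − sin τ cos τ − π) + π ≥ cos²τ · (τ₀ − sin τ₀ cos τ₀) holds. -/
open Real

lemma mul_cos_le_sin {t : ℝ} (h0 : 0 ≤ t) (h : t ≤ π / 2) : t * cos t ≤ sin t := by
  rcases lt_or_eq_of_le h with h' | h'
  · have hc : 0 < cos t := Real.cos_pos_of_mem_Ioo ⟨by linarith [Real.pi_pos], h'⟩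
    have := Real.le_tan h0 h'
    rw [Real.tan_eq_sin_div_cos, le_div_iff₀ hc] at this
    linarith
  · simp [h', Real.cos_pi_div_two]

lemma key_one_var {t : ℝ} (h0 : 0 ≤ t) (h : t ≤ π / 2) :
    t ≤ sin t * cos t + π * sin t ^ 2 := by
  have h1 : t * cos t ≤ sin t := mul_cos_le_sin h0 h
  have h2 : 2 / π * t ≤ sin t := Real.mul_le_sin h0 h
  have hpi : 0 < π := Real.pi_pos
  have hs : 0 ≤ sin t := Real.sin_nonneg_of_nonneg_of_le_pi h0 (by linarith)
  have hc : 0 ≤ cos t := Real.cos_nonneg_of_mem_Icc ⟨by linarith, h⟩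
  have hs1 : sin t ≤ 1 := Real.sin_le_one t
  have hsq : sin t ^ 2 + cos t ^ 2 = 1 := Real.sin_sq_add_cos_sq t
  have h2' : 2 * t ≤ π * sin t := by
    rw [div_mul_eq_mul_div, div_le_iff₀ hpi] at h2; linarith
  nlinarith [mul_nonneg (mul_nonneg h0 hs) (sub_nonneg.2 hs1),
    mul_le_mul_of_nonneg_right h1 hc, mul_le_mul_of_nonneg_right h2' hs]

/-- For `0 ≤ τ ≤ τ₀ ≤ π/2`,
`cos²τ₀ (τ − sin τ cos τ − π) + π ≥ cos²τ (τ₀ − sin τ₀ cos τ₀)`. -/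
theorem action_inequality_reduced (τ τ₀ : ℝ) (h0 : 0 ≤ τ) (hττ₀ : τ ≤ τ₀) (hτ₀ : τ₀ ≤ π / 2) :
    cos τ ^ 2 * (τ₀ - sin τ₀ * cos τ₀) ≤ cos τ₀ ^ 2 * (τ - sin τ * cos τ - π) + π := by
  have h0' : (0:ℝ) ≤ τ₀ := le_trans h0 hττ₀
  have hτ : τ ≤ π / 2 := le_trans hττ₀ hτ₀
  have key : τ₀ ≤ sin τ₀ * cos τ₀ + π * sin τ₀ ^ 2 := key_one_var h0' hτ₀
  have h1 : τ * cos τ ≤ sin τ := mul_cos_le_sin h0 hτ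
  have h2 : sin τ * cos τ ≤ τ := by
    have hs : 0 ≤ sin τ := Real.sin_nonneg_of_nonneg_of_le_pi h0 (by linarith [Real.pi_pos])
    have hc1 : cos τ ≤ 1 := Real.cos_le_one τ
    have := Real.sin_le h0
    nlinarith
  have h2' : sin τ₀ * cos τ₀ ≤ τ₀ := by
    have hs : 0 ≤ sin τ₀ := Real.sin_nonneg_of_nonneg_of_le_pi h0' (by linarith [Real.pi_pos])
    have hc1 : cos τ₀ ≤ 1 := Real.cos_le_one τ₀
    have := Real.sin_le h0'
    nlinarith
  have hb2 : cos τ ^ 2 ≤ 1 := by nlinarith [Real.sin_sq_add_cos_sq τ, sq_nonneg (sin τ)]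
  have hsq₀ : sin τ₀ ^ 2 + cos τ₀ ^ 2 = 1 := Real.sin_sq_add_cos_sq τ₀
  have hc2 : 0 ≤ cos τ₀ ^ 2 := sq_nonneg _
  nlinarith [mul_le_mul_of_nonneg_right hb2 (sub_nonneg.2 h2'),
    mul_nonneg hc2 (sub_nonneg.2 h2)]
end

section
/- For every x ∈ [0, π], the inequality π (1 − cos x) ≥ x − sin x holds. -/
open Real

theorem mul_cos_le_sin_s17 {x : ℝ} (hx₀ : 0 ≤ x) (hxπ : x ≤ π) : x * cos x ≤ sin x := by
  rcases le_or_gt (cos x) 0 with hcos | hcos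
  · exact (mul_nonpos_of_nonneg_of_nonpos hx₀ hcos).trans (sin_nonneg_of_nonneg_of_le_pi hx₀ hxπ)
  · have hx_lt : x < π / 2 := by
      by_contra! h
      exact hcos.not_ge (cos_nonpos_of_pi_div_two_le_of_le h (by linarith))
    have hx_le_tan := le_tan hx₀ hx_lt
    rwa [tan_eq_sin_div_cos, le_div_iff₀ hcos] at hx_le_tan

/-- For `x ∈ [0, π]`, `π (1 − cos x) ≥ x − sin x`. -/
theorem pi_one_sub_cos_ge (x : ℝ) (hx : x ∈ Set.Icc 0 π) :
    x - sin x ≤ π * (1 - cos x) :=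
  calc x - sin x ≤ x * (1 - cos x) := by linarith [mul_cos_le_sin_s17 hx.1 hx.2]
    _ ≤ π * (1 - cos x) := mul_le_mul_of_nonneg_right hx.2 (sub_nonneg.2 (cos_le_one x))
end
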